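/- arXiv:1605.06775 — 6 statements merged into one kernel-verified Lean document; each statement's English description precedes it below -/
import Mathlib

section
/- Let α ∈ (0,1) and T > 0. If f ∈ AC([0,T]), then I^α f ∈ AC([0,T]) and for almost every t ∈ (0,T), (I^α f)′(t) = (I^α f′)(t) + t^{α−1} f(0)/Γ(α). -/
/-!
Write `f = f 0 + ∫₀^· f'`. The constant part contributes `f 0 · t^α / (α Γ(α))`, the integral
of `u^(α-1) f 0 / Γ(α)` over `[0, t]`. For the other part, Fubini on the triangle
`0 < s ≤ x ≤ t` shows `I^α (∫₀^· f') = ∫₀^· I^α f'`, both sides being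
`(1/Γ(α)) ∫₀^t (t-s)^α/α · f'(s) ds`. So `I^α f` is the primitive of the integrable function
`I^α f' + t^(α-1) f 0 / Γ(α)`, and the Lebesgue differentiation theorem gives its derivative a.e.
-/

open MeasureTheory Set Filter
open scoped Topology

/-- Riemann–Liouville fractional integral of order `α`:
`(I^α f)(t) = (1/Γ(α)) ∫₀^t (t-τ)^{α-1} f(τ) dτ`. -/
noncomputable def fracInt (α : ℝ) (f : ℝ → ℝ) (t : ℝ) : ℝ :=
  (1 / Real.Gamma α) * ∫ τ in (0:ℝ)..t, (t - τ) ^ (α - 1) * f τ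

section TriangleFubini

variable {a b : ℝ} {κ : ℝ → ℝ → ℝ} {φ K : ℝ → ℝ}

lemma restrict_Ioc_restrict_Ici {s : ℝ} (hs : a < s) :
    (volume.restrict (Ioc a b)).restrict (Ici s) = volume.restrict (Ioc s b) := by
  have hset : Ici s ∩ Ioc a b = Icc s b := by
    ext x; simp only [mem_inter_iff, mem_Ici, mem_Ioc, mem_Icc]; constructor <;> grind
  rw [Measure.restrict_restrict measurableSet_Ici, hset]
  exact Measure.restrict_congr_set Ioc_ae_eq_Icc.symm

lemma restrict_Ioc_restrict_Iic {x : ℝ} (hx : x ≤ b) :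
    (volume.restrict (Ioc a b)).restrict (Iic x) = volume.restrict (Ioc a x) := by
  rw [Measure.restrict_restrict measurableSet_Iic, inter_comm, Ioc_inter_Iic, min_eq_right hx]

lemma integral_indicator_Ici_restrict_Ioc {s : ℝ} (hs : a < s) (ψ : ℝ → ℝ) :
    ∫ x, (Ici s).indicator ψ x ∂(volume.restrict (Ioc a b)) = ∫ x in Ioc s b, ψ x := by
  rw [integral_indicator measurableSet_Ici, restrict_Ioc_restrict_Ici hs]

noncomputable def lowerTriangleIntegrand (κ : ℝ → ℝ → ℝ) (φ : ℝ → ℝ) : ℝ × ℝ → ℝ :=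
  {p : ℝ × ℝ | p.2 ≤ p.1}.indicator fun p => κ p.1 p.2 * φ p.2

lemma integral_lowerTriangleIntegrand_fst {s : ℝ} (hs : a < s) :
    ∫ x, lowerTriangleIntegrand κ φ (x, s) ∂(volume.restrict (Ioc a b)) =
      (∫ x in Ioc s b, κ x s) * φ s := by
  rw [← integral_mul_const, ← integral_indicator_Ici_restrict_Ioc hs]
  rfl

lemma integral_lowerTriangleIntegrand_snd {x : ℝ} (hx : x ≤ b) :
    ∫ s, lowerTriangleIntegrand κ φ (x, s) ∂(volume.restrict (Ioc a b)) =
      ∫ s in Ioc a x, κ x s * φ s := by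
  rw [← restrict_Ioc_restrict_Iic hx, ← integral_indicator measurableSet_Iic]
  rfl

lemma integrable_lowerTriangleIntegrand (hκ : Measurable (Function.uncurry κ))
    (hφ : IntegrableOn φ (Ioc a b)) (hκ_nonneg : ∀ s ∈ Ioc a b, ∀ x ∈ Ioc s b, 0 ≤ κ x s)
    (hκ_int : ∀ s ∈ Ioc a b, IntegrableOn (κ · s) (Ioc s b))
    (hK : ∀ s ∈ Ioc a b, ∫ x in Ioc s b, κ x s = K s)
    (hKφ : IntegrableOn (fun s => K s * φ s) (Ioc a b)) :
    Integrable (lowerTriangleIntegrand κ φ)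
      ((volume.restrict (Ioc a b)).prod (volume.restrict (Ioc a b))) := by
  set μ := volume.restrict (Ioc a b)
  have hmeas : AEStronglyMeasurable (lowerTriangleIntegrand κ φ) (μ.prod μ) :=
    (hκ.aestronglyMeasurable.mul hφ.aestronglyMeasurable.comp_snd).indicator
      (measurableSet_le measurable_snd measurable_fst)
  have hslice (s : ℝ) : (fun x => lowerTriangleIntegrand κ φ (x, s)) =
      (Ici s).indicator fun x => κ x s * φ s := rfl
  have hslice_norm (s : ℝ) : (fun x => ‖lowerTriangleIntegrand κ φ (x, s)‖) =
      (Ici s).indicator fun x => ‖κ x s * φ s‖ :=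
    funext fun _ => by rw [← norm_indicator_eq_indicator_norm]; rfl
  refine (integrable_prod_iff' hmeas).2 ⟨?_, ?_⟩
  · filter_upwards [ae_restrict_mem measurableSet_Ioc] with s hs
    rw [hslice, integrable_indicator_iff measurableSet_Ici, IntegrableOn,
      restrict_Ioc_restrict_Ici hs.1]
    exact (hκ_int s hs).mul_const (φ s)
  · -- `κ ≥ 0` makes the `x`-integral of `‖F (x, s)‖` equal to `‖K s * φ s‖`
    refine Integrable.congr hKφ.norm ?_
    filter_upwards [ae_restrict_mem measurableSet_Ioc] with s hs
    rw [hslice_norm, integral_indicator_Ici_restrict_Ioc hs.1, ← hK s hs, norm_mul,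
      Real.norm_of_nonneg (setIntegral_nonneg measurableSet_Ioc (hκ_nonneg s hs)),
      ← integral_mul_const]
    refine setIntegral_congr_fun measurableSet_Ioc fun x hx => ?_
    rw [norm_mul, Real.norm_of_nonneg (hκ_nonneg s hs x hx)]

lemma MeasureTheory.Integrable.integrableOn_integral_Ioc_mul
    (hF : Integrable (lowerTriangleIntegrand κ φ)
      ((volume.restrict (Ioc a b)).prod (volume.restrict (Ioc a b)))) :
    IntegrableOn (fun x => ∫ s in Ioc a x, κ x s * φ s) (Ioc a b) :=
  IntegrableOn.congr_fun hF.integral_prod_left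
    (fun _ hx => integral_lowerTriangleIntegrand_snd hx.2) measurableSet_Ioc

lemma MeasureTheory.Integrable.integral_Ioc_integral_Ioc_mul_swap
    (hF : Integrable (lowerTriangleIntegrand κ φ)
      ((volume.restrict (Ioc a b)).prod (volume.restrict (Ioc a b))))
    (hK : ∀ s ∈ Ioc a b, ∫ x in Ioc s b, κ x s = K s) :
    ∫ x in Ioc a b, ∫ s in Ioc a x, κ x s * φ s = ∫ s in Ioc a b, K s * φ s := calc
  _ = ∫ x, ∫ s, lowerTriangleIntegrand κ φ (x, s) ∂(volume.restrict (Ioc a b))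
        ∂(volume.restrict (Ioc a b)) :=
    setIntegral_congr_fun measurableSet_Ioc fun x hx =>
      (integral_lowerTriangleIntegrand_snd hx.2).symm
  _ = ∫ s, ∫ x, lowerTriangleIntegrand κ φ (x, s) ∂(volume.restrict (Ioc a b))
        ∂(volume.restrict (Ioc a b)) := integral_integral_swap hF
  _ = _ := setIntegral_congr_fun measurableSet_Ioc fun s hs => by
    rw [integral_lowerTriangleIntegrand_fst hs.1, hK s hs]

end TriangleFubini

section RiemannLiouville

variable {α t : ℝ} {φ : ℝ → ℝ}

lemma integral_rpow_sub_one (hα : 0 < α) :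
    ∫ u in (0:ℝ)..t, u ^ (α - 1) = t ^ α / α := by
  rw [integral_rpow (Or.inl (by linarith)), sub_add_cancel, Real.zero_rpow hα.ne', sub_zero]

lemma intervalIntegrable_rpow_sub_one (hα : 0 < α) (a b : ℝ) :
    IntervalIntegrable (fun u => u ^ (α - 1)) volume a b :=
  intervalIntegral.intervalIntegrable_rpow' (by linarith)

lemma integrableOn_sub_rpow_sub_one (hα : 0 < α) (s : ℝ) :
    IntegrableOn (fun x => (x - s) ^ (α - 1)) (Ioc s t) := by
  simpa using ((intervalIntegrable_rpow_sub_one hα 0 (t - s)).comp_sub_right s).1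

lemma integrableOn_rsub_rpow_sub_one (hα : 0 < α) (s : ℝ) :
    IntegrableOn (fun x => (t - x) ^ (α - 1)) (Ioc s t) := by
  simpa using ((intervalIntegrable_rpow_sub_one hα 0 (t - s)).comp_sub_left t).2

lemma setIntegral_sub_rpow_sub_one (hα : 0 < α) {s : ℝ} (hst : s ≤ t) :
    ∫ x in Ioc s t, (x - s) ^ (α - 1) = (t - s) ^ α / α := by
  rw [← intervalIntegral.integral_of_le hst,
    intervalIntegral.integral_comp_sub_right (· ^ (α - 1)), sub_self,
    integral_rpow_sub_one hα]

lemma setIntegral_rsub_rpow_sub_one (hα : 0 < α) {s : ℝ} (hst : s ≤ t) :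
    ∫ x in Ioc s t, (t - x) ^ (α - 1) = (t - s) ^ α / α := by
  rw [← intervalIntegral.integral_of_le hst,
    intervalIntegral.integral_comp_sub_left (· ^ (α - 1)), sub_self,
    integral_rpow_sub_one hα]

lemma integrableOn_rsub_rpow_div_mul (hα : 0 < α) (hφ : IntegrableOn φ (Ioc 0 t)) :
    IntegrableOn (fun s => (t - s) ^ α / α * φ s) (Ioc 0 t) := by
  have hcont : Continuous fun s => (t - s) ^ α / α :=
    ((continuous_const.sub continuous_id).rpow_const fun _ => Or.inr hα.le).div_const _
  exact hφ.continuousOn_mul_of_subset hcont.continuousOn isCompact_Icc measurableSet_Ioc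
    Ioc_subset_Icc_self

lemma fracInt_eq_mul_setIntegral (ht : 0 ≤ t) (f : ℝ → ℝ) :
    fracInt α f t = 1 / Real.Gamma α * ∫ τ in Ioc 0 t, (t - τ) ^ (α - 1) * f τ := by
  rw [fracInt, intervalIntegral.integral_of_le ht]

lemma fracInt_congr {f g : ℝ → ℝ} (ht : 0 ≤ t) (h : EqOn f g (Ioc 0 t)) :
    fracInt α f t = fracInt α g t := by
  simp only [fracInt_eq_mul_setIntegral ht]
  congr 1
  exact setIntegral_congr_fun measurableSet_Ioc fun τ hτ => by rw [h hτ]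

lemma fracInt_add {f g : ℝ → ℝ}
    (hf : IntervalIntegrable (fun τ => (t - τ) ^ (α - 1) * f τ) volume 0 t)
    (hg : IntervalIntegrable (fun τ => (t - τ) ^ (α - 1) * g τ) volume 0 t) :
    fracInt α (fun τ => f τ + g τ) t = fracInt α f t + fracInt α g t := by
  simp only [fracInt, mul_add, intervalIntegral.integral_add hf hg]

lemma fracInt_const (c : ℝ) :
    fracInt α (fun _ => c) t = ∫ x in (0:ℝ)..t, x ^ (α - 1) * c / Real.Gamma α := by
  simp only [fracInt, intervalIntegral.integral_mul_const, intervalIntegral.integral_div,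
    intervalIntegral.integral_comp_sub_left (· ^ (α - 1)), sub_self, sub_zero]
  ring

lemma intervalIntegrable_rsub_rpow_mul (hα : 0 < α) (ht : 0 ≤ t) {g : ℝ → ℝ}
    (hg : ContinuousOn g (Icc 0 t)) :
    IntervalIntegrable (fun τ => (t - τ) ^ (α - 1) * g τ) volume 0 t := by
  rw [intervalIntegrable_iff_integrableOn_Ioc_of_le ht]
  exact (integrableOn_rsub_rpow_sub_one hα 0).mul_continuousOn_of_subset hg measurableSet_Ioc
    isCompact_Icc Ioc_subset_Icc_self

lemma integrable_lowerTriangleIntegrand_rsub_rpow (hα : 0 < α) (hφ : IntegrableOn φ (Ioc 0 t)) :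
    Integrable (lowerTriangleIntegrand (fun x _ => (t - x) ^ (α - 1)) φ)
      ((volume.restrict (Ioc 0 t)).prod (volume.restrict (Ioc 0 t))) :=
  integrable_lowerTriangleIntegrand ((measurable_const.sub measurable_fst).pow_const _) hφ
    (fun _ _ _ hx => Real.rpow_nonneg (sub_nonneg.2 hx.2) _)
    (fun s _ => integrableOn_rsub_rpow_sub_one hα s)
    (fun _ hs => setIntegral_rsub_rpow_sub_one hα hs.2) (integrableOn_rsub_rpow_div_mul hα hφ)

lemma integrable_lowerTriangleIntegrand_sub_rpow (hα : 0 < α) (hφ : IntegrableOn φ (Ioc 0 t)) :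
    Integrable (lowerTriangleIntegrand (fun x s => (x - s) ^ (α - 1)) φ)
      ((volume.restrict (Ioc 0 t)).prod (volume.restrict (Ioc 0 t))) :=
  integrable_lowerTriangleIntegrand ((measurable_fst.sub measurable_snd).pow_const _) hφ
    (fun _ _ _ hx => Real.rpow_nonneg (sub_nonneg.2 hx.1.le) _)
    (fun s _ => integrableOn_sub_rpow_sub_one hα s)
    (fun _ hs => setIntegral_sub_rpow_sub_one hα hs.2) (integrableOn_rsub_rpow_div_mul hα hφ)

lemma integrableOn_fracInt (hα : 0 < α) (hφ : IntegrableOn φ (Ioc 0 t)) :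
    IntegrableOn (fracInt α φ) (Ioc 0 t) :=
  IntegrableOn.congr_fun
    ((integrable_lowerTriangleIntegrand_sub_rpow hα hφ).integrableOn_integral_Ioc_mul.const_mul _)
    (fun _ hx => (fracInt_eq_mul_setIntegral hx.1.le φ).symm) measurableSet_Ioc

lemma fracInt_primitive (hα : 0 < α) (ht : 0 ≤ t) (hφ : IntegrableOn φ (Ioc 0 t)) :
    fracInt α (fun τ => ∫ s in (0:ℝ)..τ, φ s) t = ∫ x in (0:ℝ)..t, fracInt α φ x := calc
  _ = 1 / Real.Gamma α * ∫ x in Ioc 0 t, ∫ s in Ioc 0 x, (t - x) ^ (α - 1) * φ s := by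
    rw [fracInt_eq_mul_setIntegral ht]
    congr 1
    refine setIntegral_congr_fun measurableSet_Ioc fun x hx => ?_
    rw [intervalIntegral.integral_of_le hx.1.le, integral_const_mul]
  _ = 1 / Real.Gamma α * ∫ s in Ioc 0 t, (t - s) ^ α / α * φ s := by
    rw [(integrable_lowerTriangleIntegrand_rsub_rpow hα hφ).integral_Ioc_integral_Ioc_mul_swap
      fun _ hs => setIntegral_rsub_rpow_sub_one hα hs.2]
  _ = 1 / Real.Gamma α * ∫ x in Ioc 0 t, ∫ s in Ioc 0 x, (x - s) ^ (α - 1) * φ s := by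
    rw [(integrable_lowerTriangleIntegrand_sub_rpow hα hφ).integral_Ioc_integral_Ioc_mul_swap
      fun _ hs => setIntegral_sub_rpow_sub_one hα hs.2]
  _ = ∫ x in (0:ℝ)..t, fracInt α φ x := by
    rw [intervalIntegral.integral_of_le ht, ← integral_const_mul]
    exact setIntegral_congr_fun measurableSet_Ioc fun x hx =>
      (fracInt_eq_mul_setIntegral hx.1.le φ).symm

lemma fracInt_const_add_primitive (hα : 0 < α) (ht : 0 ≤ t) (hφ : IntegrableOn φ (Icc 0 t))
    (c : ℝ) :
    fracInt α (fun τ => c + ∫ s in (0:ℝ)..τ, φ s) t =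
      ∫ x in (0:ℝ)..t, (fracInt α φ x + x ^ (α - 1) * c / Real.Gamma α) := by
  have hφ' : IntegrableOn φ (Ioc 0 t) := hφ.mono_set Ioc_subset_Icc_self
  have hprim : ContinuousOn (fun τ => ∫ s in (0:ℝ)..τ, φ s) (Icc 0 t) := by
    rw [← uIcc_of_le ht] at hφ ⊢
    exact intervalIntegral.continuousOn_primitive_interval hφ
  rw [fracInt_add (intervalIntegrable_rsub_rpow_mul hα ht continuousOn_const)
      (intervalIntegrable_rsub_rpow_mul hα ht hprim),
    fracInt_const, fracInt_primitive hα ht hφ', add_comm,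
    intervalIntegral.integral_add ((intervalIntegrable_iff_integrableOn_Ioc_of_le ht).2
      (integrableOn_fracInt hα hφ'))
      (((intervalIntegrable_rpow_sub_one hα 0 t).mul_const c).div_const _)]

end RiemannLiouville

/-- If `f` is absolutely continuous on `[0,T]` (with a.e. derivative `f'`),
then `I^α f` is absolutely continuous on `[0,T]` and for a.e. `t ∈ (0,T)`,
`(I^α f)'(t) = (I^α f')(t) + t^{α-1} f(0)/Γ(α)`. -/
theorem stmt_7 (α T : ℝ) (hα : α ∈ Set.Ioo (0:ℝ) 1) (hT : 0 < T)
    (f f' : ℝ → ℝ)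
    (hf'int : IntegrableOn f' (Set.Icc 0 T))
    (hfAC : ∀ t ∈ Set.Icc (0:ℝ) T, f t = f 0 + ∫ τ in (0:ℝ)..t, f' τ) :
    (∃ g : ℝ → ℝ, IntegrableOn g (Set.Icc 0 T) ∧
        ∀ t ∈ Set.Icc (0:ℝ) T, fracInt α f t = fracInt α f 0 + ∫ τ in (0:ℝ)..t, g τ) ∧
      ∀ᵐ t ∂(volume.restrict (Set.Ioo 0 T)),
        HasDerivAt (fracInt α f)
          (fracInt α f' t + t ^ (α - 1) * f 0 / Real.Gamma α) t := by
  set g := fun x => fracInt α f' x + x ^ (α - 1) * f 0 / Real.Gamma α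
  have hg : IntegrableOn g (Ioc 0 T) :=
    (integrableOn_fracInt hα.1 (hf'int.mono_set Ioc_subset_Icc_self)).add
      (((intervalIntegrable_rpow_sub_one hα.1 0 T).1.mul_const _).div_const _)
  have hrep (t : ℝ) (ht : t ∈ Icc 0 T) : fracInt α f t = ∫ x in (0:ℝ)..t, g x := by
    rw [fracInt_congr ht.1 fun τ hτ => hfAC τ ⟨hτ.1.le, hτ.2.trans ht.2⟩,
      fracInt_const_add_primitive hα.1 ht.1 (hf'int.mono_set (Icc_subset_Icc_right ht.2))]
  have hfracInt_zero : fracInt α f 0 = 0 := by simp [fracInt]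
  refine ⟨⟨g, integrableOn_Icc_iff_integrableOn_Ioc (by finiteness) |>.2 hg, fun t ht => by
    rw [hfracInt_zero, zero_add, hrep t ht]⟩, ?_⟩
  have hg' : IntervalIntegrable g volume 0 T :=
    (intervalIntegrable_iff_integrableOn_Ioc_of_le hT.le).2 hg
  filter_upwards [ae_restrict_of_ae hg'.ae_hasDerivAt_integral,
    ae_restrict_mem measurableSet_Ioo] with t hder ht
  have hmem : t ∈ uIcc 0 T := by rw [uIcc_of_le hT.le]; exact Ioo_subset_Icc_self ht
  refine (hder hmem 0 left_mem_uIcc).congr_of_eventuallyEq ?_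
  filter_upwards [Ioo_mem_nhds ht.1 ht.2] with u hu using hrep u (Ioo_subset_Icc_self hu)
end

section
/- Let α ∈ (0,1), T > 0, b > 0, and let s : [0,T] → ℝ be absolutely continuous with s(0) = b, ṡ ≥ 0, and t ↦ t^{1−α} ṡ(t) continuous on [0,T]. Then for every t₁ > 0, lim_{t₂ → t₁⁺} Q_{2,1}(t₁,t₂) = 0 and lim_{t₂ → t₁⁺} Q_{2,2}(t₁,t₂) = 0. -/
open MeasureTheory Set Filter
open scoped Topology

/-- `Q_{2,1}(t₁,t₂) = t₂^{1−α} ∫₀^{t₁} [(t₁−τ)^{α−1} − (t₂−τ)^{α−1}]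
∫₀^τ (τ−p)^{−α−1} p^{α−1} [s(τ)−s(p)] dp dτ`. -/
noncomputable def Q21 (α : ℝ) (s : ℝ → ℝ) (t₁ t₂ : ℝ) : ℝ :=
  t₂ ^ (1 - α) * ∫ τ in (0:ℝ)..t₁, ((t₁ - τ) ^ (α - 1) - (t₂ - τ) ^ (α - 1)) *
    ∫ p in (0:ℝ)..τ, (τ - p) ^ (-α - 1) * p ^ (α - 1) * (s τ - s p)

/-- `Q_{2,2}(t₁,t₂) = t₂^{1−α} ∫₀^{t₁} [(t₁−τ)^{α−1} − (t₂−τ)^{α−1}] τ^{α−1}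
∫₀^τ (τ−p)^{−α} p^{α−1} dp dτ`. -/
noncomputable def Q22 (α : ℝ) (t₁ t₂ : ℝ) : ℝ :=
  t₂ ^ (1 - α) * ∫ τ in (0:ℝ)..t₁, ((t₁ - τ) ^ (α - 1) - (t₂ - τ) ^ (α - 1)) * τ ^ (α - 1) *
    ∫ p in (0:ℝ)..τ, (τ - p) ^ (-α) * p ^ (α - 1)

/- ### Auxiliary lemmas -/

section Aux
open intervalIntegral

lemma stmt11_ae_ne (c : ℝ) : ∀ᵐ u : ℝ, u ≠ c := by
  rw [ae_iff]
  have h : {u : ℝ | ¬ u ≠ c} = {c} := by ext u; simp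
  rw [h]; exact Real.volume_singleton

lemma stmt11_int_rpow0 {r : ℝ} (hr : -1 < r) (m : ℝ) :
    ∫ p in (0:ℝ)..m, p ^ r = m ^ (r + 1) / (r + 1) := by
  rw [integral_rpow (Or.inl hr), Real.zero_rpow (by linarith), sub_zero]

lemma stmt11_int_sub_rpow {r : ℝ} (hr : -1 < r) {m b : ℝ} :
    ∫ p in m..b, (b - p) ^ r = (b - m) ^ (r + 1) / (r + 1) := by
  rw [show (∫ p in m..b, (b - p) ^ r) = ∫ x in (b - b)..(b - m), x ^ r from
    integral_comp_sub_left (fun x => x ^ r) b, sub_self]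
  exact stmt11_int_rpow0 hr _

lemma stmt11_II_sub_rpow {r : ℝ} (hr : -1 < r) {m b : ℝ} :
    IntervalIntegrable (fun p : ℝ => (b - p) ^ r) volume m b := by
  have base : IntervalIntegrable (fun x : ℝ => x ^ r) volume (b - m) 0 :=
    intervalIntegrable_rpow' hr
  have comp := base.comp_sub_left b
  rwa [sub_sub_cancel, sub_zero] at comp

lemma stmt11_pieces {f B1 B2 : ℝ → ℝ} {a m b : ℝ} (ham : a ≤ m) (hmb : m ≤ b)
    (hB1 : IntervalIntegrable B1 volume a m) (hB2 : IntervalIntegrable B2 volume m b)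
    (hB1nn : ∀ x ∈ Icc a m, 0 ≤ B1 x) (hB2nn : ∀ x ∈ Icc m b, 0 ≤ B2 x)
    (h1 : ∀ x ∈ Icc a m, f x ≤ B1 x) (h2 : ∀ x ∈ Icc m b, f x ≤ B2 x) :
    (∫ x in a..b, f x) ≤ (∫ x in a..m, B1 x) + ∫ x in m..b, B2 x := by
  by_cases hI : IntervalIntegrable f volume a b
  · have hsub1 : IntervalIntegrable f volume a m :=
      hI.mono_set (by
        rw [uIcc_of_le ham, uIcc_of_le (ham.trans hmb)]; exact Icc_subset_Icc le_rfl hmb)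
    have hsub2 : IntervalIntegrable f volume m b :=
      hI.mono_set (by
        rw [uIcc_of_le hmb, uIcc_of_le (ham.trans hmb)]; exact Icc_subset_Icc ham le_rfl)
    rw [← integral_add_adjacent_intervals hsub1 hsub2]
    exact add_le_add (integral_mono_on ham hsub1 hB1 h1)
      (integral_mono_on hmb hsub2 hB2 h2)
  · rw [intervalIntegral.integral_undef hI]
    exact add_nonneg (integral_nonneg ham hB1nn) (integral_nonneg hmb hB2nn)

lemma stmt11_II_prod {α : ℝ} (h0 : 0 < α) (h1 : α < 1) {c : ℝ} (hc : 0 < c) :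
    IntervalIntegrable (fun τ : ℝ => (c - τ) ^ (α - 1) * τ ^ (α - 1)) volume 0 c := by
  have hmeas : Measurable fun τ : ℝ => (c - τ) ^ (α - 1) * τ ^ (α - 1) :=
    ((measurable_const.sub measurable_id).pow measurable_const).mul
      (measurable_id.pow measurable_const)
  have p1 : IntervalIntegrable (fun τ : ℝ => (c - τ) ^ (α - 1) * τ ^ (α - 1)) volume 0 (c/2) := by
    apply IntervalIntegrable.mono_fun'
      (g := fun τ : ℝ => (c/2) ^ (α - 1) * τ ^ (α - 1))
      ((intervalIntegrable_rpow' (by linarith)).const_mul _)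
      hmeas.aestronglyMeasurable
    rw [uIoc_of_le (by linarith)]
    filter_upwards [ae_restrict_mem measurableSet_Ioc] with x hx
    have hx0 : 0 < x := hx.1
    have hcx : c/2 ≤ c - x := by linarith [hx.2]
    have hle : (c - x) ^ (α - 1) ≤ (c/2) ^ (α - 1) :=
      Real.rpow_le_rpow_of_nonpos (by linarith) hcx (by linarith)
    have hnn : (0:ℝ) ≤ (c - x) ^ (α - 1) * x ^ (α - 1) := by
      have : (0:ℝ) ≤ c - x := by linarith
      positivity
    rw [Real.norm_eq_abs, abs_of_nonneg hnn]
    exact mul_le_mul_of_nonneg_right hle (Real.rpow_nonneg hx0.le _)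
  have p2 : IntervalIntegrable (fun τ : ℝ => (c - τ) ^ (α - 1) * τ ^ (α - 1)) volume (c/2) c := by
    have comp := (stmt11_II_sub_rpow (by linarith : (-1:ℝ) < α - 1)
      (m := c/2) (b := c)).mul_const ((c/2) ^ (α - 1))
    apply IntervalIntegrable.mono_fun' comp hmeas.aestronglyMeasurable
    rw [uIoc_of_le (by linarith)]
    filter_upwards [ae_restrict_mem measurableSet_Ioc] with x hx
    have hx0 : 0 < x := lt_of_lt_of_le (by linarith) hx.1.le
    have hcx : (0:ℝ) ≤ c - x := by linarith [hx.2]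
    have hle : x ^ (α - 1) ≤ (c/2) ^ (α - 1) :=
      Real.rpow_le_rpow_of_nonpos (by linarith) hx.1.le (by linarith)
    have hnn : (0:ℝ) ≤ (c - x) ^ (α - 1) * x ^ (α - 1) := by positivity
    rw [Real.norm_eq_abs, abs_of_nonneg hnn]
    exact mul_le_mul_of_nonneg_left hle (Real.rpow_nonneg hcx _)
  exact p1.trans p2

lemma stmt11_inner22_le {α : ℝ} (h0 : 0 < α) (h1 : α < 1) {τ : ℝ} (hτ : 0 < τ) :
    (∫ p in (0:ℝ)..τ, (τ - p) ^ (-α) * p ^ (α - 1)) ≤ 1/α + 1/(1-α) := by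
  have h2 : 0 < τ/2 := by linarith
  have key := stmt11_pieces (f := fun p : ℝ => (τ - p) ^ (-α) * p ^ (α - 1))
    (B1 := fun p : ℝ => (τ/2) ^ (-α) * p ^ (α - 1))
    (B2 := fun p : ℝ => (τ/2) ^ (α - 1) * (τ - p) ^ (-α))
    (a := 0) (m := τ/2) (b := τ) (by linarith) (by linarith)
    ((intervalIntegrable_rpow' (by linarith)).const_mul _)
    ((stmt11_II_sub_rpow (by linarith)).const_mul _)
    (fun x hx => mul_nonneg (Real.rpow_nonneg h2.le _) (Real.rpow_nonneg hx.1 _))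
    (fun x hx => mul_nonneg (Real.rpow_nonneg (by positivity) _)
      (Real.rpow_nonneg (by linarith [hx.2]) _))
    ?_ ?_
  · refine key.trans (le_of_eq ?_)
    rw [intervalIntegral.integral_const_mul, intervalIntegral.integral_const_mul,
      stmt11_int_rpow0 (by linarith), stmt11_int_sub_rpow (by linarith),
      show α - 1 + 1 = α by ring, show τ - τ/2 = τ/2 by ring, show -α + 1 = 1 - α by ring]
    have e1 : (τ/2) ^ (-α) * (τ/2) ^ α = 1 := by
      rw [← Real.rpow_add h2, show -α + α = 0 by ring, Real.rpow_zero]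
    have e2 : (τ/2) ^ (α-1) * (τ/2) ^ (1-α) = 1 := by
      rw [← Real.rpow_add h2, show α - 1 + (1-α) = 0 by ring, Real.rpow_zero]
    calc (τ/2) ^ (-α) * ((τ/2) ^ α / α) + (τ/2) ^ (α-1) * ((τ/2) ^ (1-α) / (1-α))
        = ((τ/2) ^ (-α) * (τ/2) ^ α) / α + ((τ/2) ^ (α-1) * (τ/2) ^ (1-α)) / (1-α) := by ring
      _ = 1/α + 1/(1-α) := by rw [e1, e2]
  · rintro p ⟨hp0, hp2⟩
    exact mul_le_mul_of_nonneg_right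
      (Real.rpow_le_rpow_of_nonpos h2 (by linarith) (by linarith))
      (Real.rpow_nonneg hp0 _)
  · rintro p ⟨hp1, hp2⟩
    calc (τ - p) ^ (-α) * p ^ (α-1) ≤ (τ - p) ^ (-α) * (τ/2) ^ (α-1) :=
          mul_le_mul_of_nonneg_left
            (Real.rpow_le_rpow_of_nonpos h2 hp1 (by linarith))
            (Real.rpow_nonneg (by linarith) _)
      _ = (τ/2) ^ (α-1) * (τ - p) ^ (-α) := mul_comm _ _

lemma stmt11_g21_le {α T M : ℝ} (h0 : 0 < α) (h1 : α < 1) {s s' : ℝ → ℝ}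
    (hM0 : 0 ≤ M)
    (hs'int : IntegrableOn s' (Icc 0 T))
    (hs'pos : ∀ t ∈ Icc (0:ℝ) T, 0 ≤ s' t)
    (hs'le : ∀ u : ℝ, 0 < u → u ≤ T → s' u ≤ M * u ^ (α - 1))
    (hsd : ∀ p q : ℝ, 0 ≤ p → p ≤ q → q ≤ T → s q - s p = ∫ u in p..q, s' u)
    {τ : ℝ} (hτ0 : 0 < τ) (hτT : τ ≤ T) :
    (∫ p in (0:ℝ)..τ, (τ - p) ^ (-α - 1) * p ^ (α - 1) * (s τ - s p)) ≤
      (2*M/α^2 + M*2^(1-α)/(1-α)) * τ ^ (α - 1) := by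
  have h2 : 0 < τ/2 := by linarith
  have hint : ∀ p q : ℝ, 0 ≤ p → p ≤ q → q ≤ T → IntervalIntegrable s' volume p q := by
    intro p q hp hpq hqT
    exact (intervalIntegrable_iff_integrableOn_Icc_of_le hpq).2
      (hs'int.mono_set (Icc_subset_Icc hp hqT))
  have hd_nonneg : ∀ p : ℝ, 0 ≤ p → p ≤ τ → 0 ≤ s τ - s p := by
    intro p hp hpτ
    rw [hsd p τ hp hpτ hτT]
    exact intervalIntegral.integral_nonneg hpτ fun u hu =>
      hs'pos u ⟨hp.trans hu.1, hu.2.trans hτT⟩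
  have hd_le1 : ∀ p : ℝ, 0 ≤ p → p ≤ τ → s τ - s p ≤ M/α * τ ^ α := by
    intro p hp hpτ
    rw [hsd p τ hp hpτ hτT]
    have hmono : (∫ u in p..τ, s' u) ≤ ∫ u in p..τ, M * u ^ (α - 1) := by
      refine intervalIntegral.integral_mono_ae_restrict hpτ (hint p τ hp hpτ hτT)
        ((intervalIntegrable_rpow' (by linarith : (-1:ℝ) < α - 1)).const_mul M) ?_
      filter_upwards [ae_restrict_of_ae (stmt11_ae_ne 0), ae_restrict_mem measurableSet_Icc]
        with u hu0 huI
      exact hs'le u (lt_of_le_of_ne (hp.trans huI.1) (Ne.symm hu0)) (huI.2.trans hτT)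
    refine hmono.trans ?_
    rw [intervalIntegral.integral_const_mul, integral_rpow (Or.inl (by linarith)),
      show α - 1 + 1 = α by ring]
    have hYnn : 0 ≤ p ^ α := Real.rpow_nonneg hp _
    calc M * ((τ ^ α - p ^ α) / α) = M/α * τ ^ α - M * p ^ α / α := by ring
      _ ≤ M/α * τ ^ α := sub_le_self _ (div_nonneg (mul_nonneg hM0 hYnn) h0.le)
  have hd_le2 : ∀ p : ℝ, τ/2 ≤ p → p ≤ τ → s τ - s p ≤ M * (τ/2) ^ (α-1) * (τ - p) := by
    intro p hp hpτ
    rw [hsd p τ (by linarith) hpτ hτT]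
    have hmono : (∫ u in p..τ, s' u) ≤ ∫ _u in p..τ, M * (τ/2) ^ (α-1) := by
      refine intervalIntegral.integral_mono_on hpτ (hint p τ (by linarith) hpτ hτT)
        intervalIntegrable_const ?_
      intro u hu
      have hu0 : 0 < u := lt_of_lt_of_le h2 (hp.trans hu.1)
      calc s' u ≤ M * u ^ (α-1) := hs'le u hu0 (hu.2.trans hτT)
        _ ≤ M * (τ/2) ^ (α-1) := mul_le_mul_of_nonneg_left
            (Real.rpow_le_rpow_of_nonpos h2 (hp.trans hu.1) (by linarith)) hM0
    refine hmono.trans ?_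
    rw [intervalIntegral.integral_const, smul_eq_mul]
    exact le_of_eq (by ring)
  have key := stmt11_pieces
    (f := fun p : ℝ => (τ - p) ^ (-α - 1) * p ^ (α - 1) * (s τ - s p))
    (B1 := fun p : ℝ => ((τ/2) ^ (-α-1) * (M/α * τ ^ α)) * p ^ (α - 1))
    (B2 := fun p : ℝ => (M * (τ/2) ^ (α-1) * (τ/2) ^ (α-1)) * (τ - p) ^ (-α))
    (a := 0) (m := τ/2) (b := τ) (by linarith) (by linarith)
    ((intervalIntegrable_rpow' (by linarith)).const_mul _)
    ((stmt11_II_sub_rpow (by linarith)).const_mul _)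
    (fun x hx => mul_nonneg (mul_nonneg (Real.rpow_nonneg h2.le _)
      (mul_nonneg (div_nonneg hM0 h0.le) (Real.rpow_nonneg hτ0.le _)))
      (Real.rpow_nonneg hx.1 _))
    (fun x hx => mul_nonneg (by positivity)
      (Real.rpow_nonneg (by linarith [hx.2]) _))
    ?_ ?_
  · refine key.trans (le_of_eq ?_)
    rw [intervalIntegral.integral_const_mul, intervalIntegral.integral_const_mul,
      stmt11_int_rpow0 (by linarith), stmt11_int_sub_rpow (by linarith),
      show α - 1 + 1 = α by ring, show τ - τ/2 = τ/2 by ring, show -α + 1 = 1 - α by ring]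
    have e1 : (τ/2) ^ (-α-1) * (τ/2) ^ α = (τ/2)⁻¹ := by
      rw [← Real.rpow_add h2, show -α - 1 + α = -1 by ring, Real.rpow_neg_one]
    have e2 : (τ/2) ^ (α-1) * (τ/2) ^ (1-α) = 1 := by
      rw [← Real.rpow_add h2, show α - 1 + (1-α) = 0 by ring, Real.rpow_zero]
    have e3 : (τ/2) ^ (α-1) = 2 ^ (1-α) * τ ^ (α-1) := by
      rw [Real.div_rpow hτ0.le (by norm_num : (0:ℝ) ≤ 2), div_eq_mul_inv,
        ← Real.rpow_neg (by norm_num : (0:ℝ) ≤ 2), show -(α-1) = 1-α by ring]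
      ring
    have e4 : τ ^ (α-1) * τ = τ ^ α := by
      rw [← Real.rpow_add_one hτ0.ne' (α-1), show α - 1 + 1 = α by ring]
    calc (τ/2) ^ (-α-1) * (M/α * τ ^ α) * ((τ/2) ^ α / α)
          + M * (τ/2) ^ (α-1) * (τ/2) ^ (α-1) * ((τ/2) ^ (1-α) / (1-α))
        = (M/α^2 * τ ^ α) * ((τ/2) ^ (-α-1) * (τ/2) ^ α)
          + (M/(1-α) * (τ/2) ^ (α-1)) * ((τ/2) ^ (α-1) * (τ/2) ^ (1-α)) := by ring
      _ = (M/α^2 * τ ^ α) * (τ/2)⁻¹ + (M/(1-α) * (2 ^ (1-α) * τ ^ (α-1))) * 1 := by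
          rw [e1, e2, e3]
      _ = (2*M/α^2 + M*2^(1-α)/(1-α)) * τ ^ (α-1) := by
          rw [← e4]
          field_simp
  · rintro p ⟨hp0, hp2⟩
    have hd := hd_le1 p hp0 (by linarith)
    have hdnn := hd_nonneg p hp0 (by linarith)
    have hx : (τ - p) ^ (-α-1) ≤ (τ/2) ^ (-α-1) :=
      Real.rpow_le_rpow_of_nonpos h2 (by linarith) (by linarith)
    have hynn : (0:ℝ) ≤ p ^ (α-1) := Real.rpow_nonneg hp0 _
    calc (τ - p) ^ (-α - 1) * p ^ (α-1) * (s τ - s p)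
        ≤ ((τ/2) ^ (-α-1) * p ^ (α-1)) * (M/α * τ ^ α) :=
          mul_le_mul (mul_le_mul_of_nonneg_right hx hynn) hd hdnn
            (mul_nonneg (Real.rpow_nonneg h2.le _) hynn)
      _ = ((τ/2) ^ (-α-1) * (M/α * τ ^ α)) * p ^ (α-1) := by ring
  · rintro p ⟨hp1, hp2⟩
    have hd := hd_le2 p hp1 hp2
    have hdnn := hd_nonneg p (by linarith) hp2
    have hy : p ^ (α-1) ≤ (τ/2) ^ (α-1) :=
      Real.rpow_le_rpow_of_nonpos h2 hp1 (by linarith)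
    have hxnn : (0:ℝ) ≤ (τ - p) ^ (-α-1) := Real.rpow_nonneg (by linarith) _
    have key3 : (τ - p) ^ (-α-1) * (τ - p) = (τ - p) ^ (-α) := by
      rcases eq_or_lt_of_le hp2 with he | hlt
      · rw [he, sub_self, Real.zero_rpow (by linarith : (-α:ℝ) - 1 ≠ 0),
          Real.zero_rpow (by linarith : (-α:ℝ) ≠ 0), mul_zero]
      · rw [← Real.rpow_add_one (by linarith : τ - p ≠ 0) (-α-1),
          show -α - 1 + 1 = -α by ring]
    calc (τ - p) ^ (-α - 1) * p ^ (α-1) * (s τ - s p)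
        ≤ ((τ - p) ^ (-α-1) * (τ/2) ^ (α-1)) * (M * (τ/2) ^ (α-1) * (τ - p)) :=
          mul_le_mul (mul_le_mul_of_nonneg_left hy hxnn) hd hdnn
            (mul_nonneg hxnn (Real.rpow_nonneg h2.le _))
      _ = (M * (τ/2) ^ (α-1) * (τ/2) ^ (α-1)) * ((τ - p) ^ (-α-1) * (τ - p)) := by ring
      _ = (M * (τ/2) ^ (α-1) * (τ/2) ^ (α-1)) * (τ - p) ^ (-α) := by rw [key3]

end Aux

/-- For every `t₁ > 0`, `Q_{2,1}(t₁,t₂) → 0` and `Q_{2,2}(t₁,t₂) → 0`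
as `t₂ → t₁⁺`. -/
theorem stmt_11 (α T b : ℝ) (hα : α ∈ Set.Ioo (0:ℝ) 1) (hT : 0 < T) (hb : 0 < b)
    (s s' : ℝ → ℝ)
    (hs'int : IntegrableOn s' (Set.Icc 0 T))
    (hsAC : ∀ t ∈ Set.Icc (0:ℝ) T, s t = b + ∫ τ in (0:ℝ)..t, s' τ)
    (hs'pos : ∀ t ∈ Set.Icc (0:ℝ) T, 0 ≤ s' t)
    (hs'cont : ContinuousOn (fun t : ℝ => t ^ (1 - α) * s' t) (Set.Icc 0 T)) :
    ∀ t₁ ∈ Set.Ioo (0:ℝ) T,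
      Filter.Tendsto (fun t₂ => Q21 α s t₁ t₂) (nhdsWithin t₁ (Set.Ioc t₁ T)) (nhds 0) ∧
      Filter.Tendsto (fun t₂ => Q22 α t₁ t₂) (nhdsWithin t₁ (Set.Ioc t₁ T)) (nhds 0) := by
  obtain ⟨hα0, hα1⟩ := hα
  intro t₁ ht₁
  obtain ⟨ht₁0, ht₁T⟩ := ht₁
  -- the bound `M` for `u^{1-α} s'(u)`
  obtain ⟨M, hM⟩ := (isCompact_Icc : IsCompact (Icc (0:ℝ) T)).exists_bound_of_continuousOn hs'cont
  have hM0 : 0 ≤ M := (norm_nonneg _).trans (hM 0 ⟨le_rfl, hT.le⟩)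
  have hs'le : ∀ u : ℝ, 0 < u → u ≤ T → s' u ≤ M * u ^ (α - 1) := by
    intro u hu0 huT
    have h1' : u ^ (1-α) * s' u ≤ M := by
      have := hM u ⟨hu0.le, huT⟩
      rw [Real.norm_eq_abs] at this
      exact (le_abs_self _).trans this
    have e : s' u = u ^ (α-1) * (u ^ (1-α) * s' u) := by
      rw [← mul_assoc, ← Real.rpow_add hu0, show α - 1 + (1-α) = 0 by ring,
        Real.rpow_zero, one_mul]
    rw [e]
    calc u ^ (α-1) * (u ^ (1-α) * s' u) ≤ u ^ (α-1) * M :=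
        mul_le_mul_of_nonneg_left h1' (Real.rpow_nonneg hu0.le _)
      _ = M * u ^ (α-1) := mul_comm _ _
  -- `s q - s p = ∫ s'`
  have hsd : ∀ p q : ℝ, 0 ≤ p → p ≤ q → q ≤ T → s q - s p = ∫ u in p..q, s' u := by
    intro p q hp hpq hqT
    have h1' : IntervalIntegrable s' volume 0 q :=
      (intervalIntegrable_iff_integrableOn_Icc_of_le (hp.trans hpq)).2
        (hs'int.mono_set (Icc_subset_Icc le_rfl hqT))
    have h2' : IntervalIntegrable s' volume 0 p :=
      (intervalIntegrable_iff_integrableOn_Icc_of_le hp).2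
        (hs'int.mono_set (Icc_subset_Icc le_rfl (hpq.trans hqT)))
    rw [hsAC q ⟨hp.trans hpq, hqT⟩, hsAC p ⟨hp, hpq.trans hqT⟩]
    calc (b + ∫ u in (0:ℝ)..q, s' u) - (b + ∫ u in (0:ℝ)..p, s' u)
        = (∫ u in (0:ℝ)..q, s' u) - ∫ u in (0:ℝ)..p, s' u := by ring
      _ = ∫ u in p..q, s' u := intervalIntegral.integral_interval_sub_left h1' h2'
  -- nonnegativity of the inner integrals
  have hg21nn : ∀ τ ∈ Icc (0:ℝ) t₁,
      0 ≤ ∫ p in (0:ℝ)..τ, (τ - p) ^ (-α - 1) * p ^ (α - 1) * (s τ - s p) := by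
    intro τ hτ
    refine intervalIntegral.integral_nonneg hτ.1 fun p hp => ?_
    have hd : 0 ≤ s τ - s p := by
      rw [hsd p τ hp.1 hp.2 (hτ.2.trans ht₁T.le)]
      exact intervalIntegral.integral_nonneg hp.2 fun u hu =>
        hs'pos u ⟨hp.1.trans hu.1, hu.2.trans (hτ.2.trans ht₁T.le)⟩
    have h1' : (0:ℝ) ≤ τ - p := by linarith [hp.2]
    exact mul_nonneg (mul_nonneg (Real.rpow_nonneg h1' _) (Real.rpow_nonneg hp.1 _)) hd
  have hg22nn : ∀ τ ∈ Icc (0:ℝ) t₁,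
      0 ≤ ∫ p in (0:ℝ)..τ, (τ - p) ^ (-α) * p ^ (α - 1) := by
    intro τ hτ
    refine intervalIntegral.integral_nonneg hτ.1 fun p hp => ?_
    have h1' : (0:ℝ) ≤ τ - p := by linarith [hp.2]
    exact mul_nonneg (Real.rpow_nonneg h1' _) (Real.rpow_nonneg hp.1 _)
  -- constants
  set C21 : ℝ := 2*M/α^2 + M*2^(1-α)/(1-α) with hC21def
  have hC21nn : 0 ≤ C21 :=
    add_nonneg (div_nonneg (by linarith) (by positivity))
      (div_nonneg (mul_nonneg hM0 (Real.rpow_nonneg (by norm_num) _)) (by linarith))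
  set K : ℝ := 1/α + 1/(1-α) with hKdef
  have hKnn : 0 ≤ K :=
    add_nonneg (by positivity) (div_nonneg zero_le_one (by linarith))
  have hg21b : ∀ τ ∈ Ioc (0:ℝ) t₁,
      (∫ p in (0:ℝ)..τ, (τ - p) ^ (-α - 1) * p ^ (α - 1) * (s τ - s p)) ≤
        C21 * τ ^ (α - 1) := fun τ hτ =>
    stmt11_g21_le hα0 hα1 hM0 hs'int hs'pos hs'le hsd hτ.1 (hτ.2.trans ht₁T.le)
  -- measurability
  have measD : ∀ t₂ : ℝ, Measurable fun τ : ℝ =>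
      ((t₁ - τ) ^ (α-1) - (t₂ - τ) ^ (α-1)) * τ ^ (α-1) := by
    intro t₂
    exact (((measurable_const.sub measurable_id).pow measurable_const).sub
      ((measurable_const.sub measurable_id).pow measurable_const)).mul
      (measurable_id.pow measurable_const)
  -- basic facts about `D τ = (t₁-τ)^(α-1) - (t₂-τ)^(α-1)` for `t₁ < t₂`, `0 ≤ τ < t₁`
  have hDfacts : ∀ t₂ ∈ Ioc t₁ T, ∀ τ : ℝ, 0 ≤ τ → τ < t₁ →
      0 ≤ (t₁ - τ) ^ (α-1) - (t₂ - τ) ^ (α-1) ∧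
      (t₁ - τ) ^ (α-1) - (t₂ - τ) ^ (α-1) ≤ (t₁ - τ) ^ (α-1) := by
    intro t₂ ht₂ τ hτ0 hτ1
    constructor
    · exact sub_nonneg.2 (Real.rpow_le_rpow_of_nonpos (by linarith)
        (by linarith [ht₂.1]) (by linarith))
    · exact sub_le_self _ (Real.rpow_nonneg (by linarith [ht₂.1]) _)
  -- the key limit
  have hV : Tendsto (fun t₂ => ∫ τ in (0:ℝ)..t₁,
      ((t₁ - τ) ^ (α-1) - (t₂ - τ) ^ (α-1)) * τ ^ (α-1))
      (𝓝[Ioc t₁ T] t₁) (𝓝 0) := by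
    have h := intervalIntegral.tendsto_integral_filter_of_dominated_convergence
      (μ := volume) (a := 0) (b := t₁)
      (F := fun t₂ τ => ((t₁ - τ) ^ (α-1) - (t₂ - τ) ^ (α-1)) * τ ^ (α-1))
      (f := fun _ => (0:ℝ)) (l := 𝓝[Ioc t₁ T] t₁)
      (fun τ => (t₁ - τ) ^ (α-1) * τ ^ (α-1)) ?_ ?_ ?_ ?_
    · simpa using h
    · exact Eventually.of_forall fun t₂ => (measD t₂).aestronglyMeasurable
    · refine eventually_of_mem self_mem_nhdsWithin fun t₂ ht₂ => ?_
      filter_upwards [stmt11_ae_ne t₁] with τ hne hmem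
      rw [uIoc_of_le ht₁0.le] at hmem
      have hτ1 : τ < t₁ := lt_of_le_of_ne hmem.2 hne
      obtain ⟨hd0, hdle⟩ := hDfacts t₂ ht₂ τ hmem.1.le hτ1
      rw [Real.norm_eq_abs, abs_mul, abs_of_nonneg hd0,
        abs_of_nonneg (Real.rpow_nonneg hmem.1.le _)]
      exact mul_le_mul_of_nonneg_right hdle (Real.rpow_nonneg hmem.1.le _)
    · exact stmt11_II_prod hα0 hα1 ht₁0
    · filter_upwards [stmt11_ae_ne t₁] with τ hne hmem
      rw [uIoc_of_le ht₁0.le] at hmem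
      have hτ1 : τ < t₁ := lt_of_le_of_ne hmem.2 hne
      have hc : ContinuousAt (fun t₂ : ℝ =>
          ((t₁ - τ) ^ (α-1) - (t₂ - τ) ^ (α-1)) * τ ^ (α-1)) t₁ := by
        refine ContinuousAt.mul (continuousAt_const.sub ?_) continuousAt_const
        exact (continuousAt_id.sub continuousAt_const).rpow_const
          (Or.inl (sub_ne_zero_of_ne (ne_of_gt hτ1)))
      have h2 := hc.tendsto.mono_left (nhdsWithin_le_nhds (s := Ioc t₁ T))
      simpa using h2
  -- upper-limit functions
  have hUpper : ∀ c : ℝ, Tendsto (fun t₂ => t₂ ^ (1-α) * (c * ∫ τ in (0:ℝ)..t₁,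
      ((t₁ - τ) ^ (α-1) - (t₂ - τ) ^ (α-1)) * τ ^ (α-1)))
      (𝓝[Ioc t₁ T] t₁) (𝓝 0) := by
    intro c
    have h1 : Tendsto (fun t₂ : ℝ => t₂ ^ (1-α)) (𝓝[Ioc t₁ T] t₁) (𝓝 (t₁ ^ (1-α))) :=
      ((continuousAt_id.rpow_const (Or.inl ht₁0.ne')).tendsto).mono_left
        (nhdsWithin_le_nhds (s := Ioc t₁ T))
    have h2 := h1.mul (hV.const_mul c)
    simpa using h2
  constructor
  · -- Q21
    refine tendsto_of_tendsto_of_tendsto_of_le_of_le' tendsto_const_nhds (hUpper C21) ?_ ?_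
    · refine eventually_of_mem self_mem_nhdsWithin fun t₂ ht₂ => ?_
      refine mul_nonneg (Real.rpow_nonneg (by linarith [ht₂.1]) _) ?_
      refine intervalIntegral.integral_nonneg_of_ae_restrict ht₁0.le ?_
      filter_upwards [ae_restrict_of_ae (stmt11_ae_ne t₁), ae_restrict_mem measurableSet_Icc]
        with τ hne hmem
      obtain ⟨hd0, _⟩ := hDfacts t₂ ht₂ τ hmem.1 (lt_of_le_of_ne hmem.2 hne)
      exact mul_nonneg hd0 (hg21nn τ hmem)
    · refine eventually_of_mem self_mem_nhdsWithin fun t₂ ht₂ => ?_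
      show Q21 α s t₁ t₂ ≤ _
      rw [Q21]
      refine mul_le_mul_of_nonneg_left ?_ (Real.rpow_nonneg (by linarith [ht₂.1]) _)
      have hRHSeq : (∫ τ in (0:ℝ)..t₁, ((t₁ - τ) ^ (α-1) - (t₂ - τ) ^ (α-1)) *
          (C21 * τ ^ (α-1))) = C21 * ∫ τ in (0:ℝ)..t₁,
          ((t₁ - τ) ^ (α-1) - (t₂ - τ) ^ (α-1)) * τ ^ (α-1) := by
        rw [← intervalIntegral.integral_const_mul]
        congr 1
        funext τ
        ring
      have hmajnn : ∀ᵐ τ ∂(volume.restrict (Icc (0:ℝ) t₁)),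
          0 ≤ ((t₁ - τ) ^ (α-1) - (t₂ - τ) ^ (α-1)) * (C21 * τ ^ (α-1)) := by
        filter_upwards [ae_restrict_of_ae (stmt11_ae_ne t₁),
          ae_restrict_mem measurableSet_Icc] with τ hne hmem
        obtain ⟨hd0, _⟩ := hDfacts t₂ ht₂ τ hmem.1 (lt_of_le_of_ne hmem.2 hne)
        exact mul_nonneg hd0 (mul_nonneg hC21nn (Real.rpow_nonneg hmem.1 _))
      have hmaj : IntervalIntegrable (fun τ =>
          ((t₁ - τ) ^ (α-1) - (t₂ - τ) ^ (α-1)) * (C21 * τ ^ (α-1))) volume 0 t₁ := by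
        refine IntervalIntegrable.mono_fun'
          ((stmt11_II_prod hα0 hα1 ht₁0).const_mul C21)
          (((((measurable_const.sub measurable_id).pow measurable_const).sub
            ((measurable_const.sub measurable_id).pow measurable_const)).mul
            (measurable_const.mul (measurable_id.pow measurable_const))).aestronglyMeasurable) ?_
        rw [uIoc_of_le ht₁0.le]
        filter_upwards [ae_restrict_of_ae (stmt11_ae_ne t₁),
          ae_restrict_mem measurableSet_Ioc] with τ hne hmem
        have hτ1 : τ < t₁ := lt_of_le_of_ne hmem.2 hne
        obtain ⟨hd0, hdle⟩ := hDfacts t₂ ht₂ τ hmem.1.le hτ1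
        have hynn : (0:ℝ) ≤ τ ^ (α-1) := Real.rpow_nonneg hmem.1.le _
        rw [Real.norm_eq_abs, abs_mul, abs_of_nonneg hd0,
          abs_of_nonneg (mul_nonneg hC21nn hynn)]
        calc ((t₁ - τ) ^ (α-1) - (t₂ - τ) ^ (α-1)) * (C21 * τ ^ (α-1))
            ≤ (t₁ - τ) ^ (α-1) * (C21 * τ ^ (α-1)) :=
              mul_le_mul_of_nonneg_right hdle (mul_nonneg hC21nn hynn)
          _ = C21 * ((t₁ - τ) ^ (α-1) * τ ^ (α-1)) := by ring
      by_cases hI : IntervalIntegrable (fun τ =>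
          ((t₁ - τ) ^ (α-1) - (t₂ - τ) ^ (α-1)) *
          ∫ p in (0:ℝ)..τ, (τ - p) ^ (-α - 1) * p ^ (α - 1) * (s τ - s p)) volume 0 t₁
      · rw [← hRHSeq]
        refine intervalIntegral.integral_mono_ae_restrict ht₁0.le hI hmaj ?_
        filter_upwards [ae_restrict_of_ae (stmt11_ae_ne t₁),
          ae_restrict_of_ae (stmt11_ae_ne 0), ae_restrict_mem measurableSet_Icc]
          with τ hne1 hne0 hmem
        have hτ0 : 0 < τ := lt_of_le_of_ne hmem.1 (Ne.symm hne0)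
        have hτ1 : τ < t₁ := lt_of_le_of_ne hmem.2 hne1
        obtain ⟨hd0, _⟩ := hDfacts t₂ ht₂ τ hτ0.le hτ1
        exact mul_le_mul_of_nonneg_left (hg21b τ ⟨hτ0, hτ1.le⟩) hd0
      · rw [intervalIntegral.integral_undef hI, ← hRHSeq]
        exact intervalIntegral.integral_nonneg_of_ae_restrict ht₁0.le hmajnn
  · -- Q22
    refine tendsto_of_tendsto_of_tendsto_of_le_of_le' tendsto_const_nhds (hUpper K) ?_ ?_
    · refine eventually_of_mem self_mem_nhdsWithin fun t₂ ht₂ => ?_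
      refine mul_nonneg (Real.rpow_nonneg (by linarith [ht₂.1]) _) ?_
      refine intervalIntegral.integral_nonneg_of_ae_restrict ht₁0.le ?_
      filter_upwards [ae_restrict_of_ae (stmt11_ae_ne t₁), ae_restrict_mem measurableSet_Icc]
        with τ hne hmem
      obtain ⟨hd0, _⟩ := hDfacts t₂ ht₂ τ hmem.1 (lt_of_le_of_ne hmem.2 hne)
      exact mul_nonneg (mul_nonneg hd0 (Real.rpow_nonneg hmem.1 _)) (hg22nn τ hmem)
    · refine eventually_of_mem self_mem_nhdsWithin fun t₂ ht₂ => ?_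
      show Q22 α t₁ t₂ ≤ _
      rw [Q22]
      refine mul_le_mul_of_nonneg_left ?_ (Real.rpow_nonneg (by linarith [ht₂.1]) _)
      have hRHSeq : (∫ τ in (0:ℝ)..t₁, ((t₁ - τ) ^ (α-1) - (t₂ - τ) ^ (α-1)) *
          τ ^ (α-1) * K) = K * ∫ τ in (0:ℝ)..t₁,
          ((t₁ - τ) ^ (α-1) - (t₂ - τ) ^ (α-1)) * τ ^ (α-1) := by
        rw [← intervalIntegral.integral_const_mul]
        congr 1
        funext τ
        ring
      have hmajnn : ∀ᵐ τ ∂(volume.restrict (Icc (0:ℝ) t₁)),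
          0 ≤ ((t₁ - τ) ^ (α-1) - (t₂ - τ) ^ (α-1)) * τ ^ (α-1) * K := by
        filter_upwards [ae_restrict_of_ae (stmt11_ae_ne t₁),
          ae_restrict_mem measurableSet_Icc] with τ hne hmem
        obtain ⟨hd0, _⟩ := hDfacts t₂ ht₂ τ hmem.1 (lt_of_le_of_ne hmem.2 hne)
        exact mul_nonneg (mul_nonneg hd0 (Real.rpow_nonneg hmem.1 _)) hKnn
      have hmaj : IntervalIntegrable (fun τ =>
          ((t₁ - τ) ^ (α-1) - (t₂ - τ) ^ (α-1)) * τ ^ (α-1) * K) volume 0 t₁ := by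
        refine IntervalIntegrable.mono_fun'
          ((stmt11_II_prod hα0 hα1 ht₁0).const_mul K)
          ((measD t₂).mul_const K).aestronglyMeasurable ?_
        rw [uIoc_of_le ht₁0.le]
        filter_upwards [ae_restrict_of_ae (stmt11_ae_ne t₁),
          ae_restrict_mem measurableSet_Ioc] with τ hne hmem
        have hτ1 : τ < t₁ := lt_of_le_of_ne hmem.2 hne
        obtain ⟨hd0, hdle⟩ := hDfacts t₂ ht₂ τ hmem.1.le hτ1
        have hynn : (0:ℝ) ≤ τ ^ (α-1) := Real.rpow_nonneg hmem.1.le _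
        rw [Real.norm_eq_abs, abs_mul, abs_mul, abs_of_nonneg hd0, abs_of_nonneg hynn,
          abs_of_nonneg hKnn]
        calc ((t₁ - τ) ^ (α-1) - (t₂ - τ) ^ (α-1)) * τ ^ (α-1) * K
            ≤ (t₁ - τ) ^ (α-1) * τ ^ (α-1) * K :=
              mul_le_mul_of_nonneg_right (mul_le_mul_of_nonneg_right hdle hynn) hKnn
          _ = K * ((t₁ - τ) ^ (α-1) * τ ^ (α-1)) := by ring
      by_cases hI : IntervalIntegrable (fun τ =>
          ((t₁ - τ) ^ (α-1) - (t₂ - τ) ^ (α-1)) * τ ^ (α-1) *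
          ∫ p in (0:ℝ)..τ, (τ - p) ^ (-α) * p ^ (α - 1)) volume 0 t₁
      · rw [← hRHSeq]
        refine intervalIntegral.integral_mono_ae_restrict ht₁0.le hI hmaj ?_
        filter_upwards [ae_restrict_of_ae (stmt11_ae_ne t₁),
          ae_restrict_of_ae (stmt11_ae_ne 0), ae_restrict_mem measurableSet_Icc]
          with τ hne1 hne0 hmem
        have hτ0 : 0 < τ := lt_of_le_of_ne hmem.1 (Ne.symm hne0)
        have hτ1 : τ < t₁ := lt_of_le_of_ne hmem.2 hne1
        obtain ⟨hd0, _⟩ := hDfacts t₂ ht₂ τ hτ0.le hτ1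
        exact mul_le_mul_of_nonneg_left (stmt11_inner22_le hα0 hα1 hτ0)
          (mul_nonneg hd0 (Real.rpow_nonneg hτ0.le _))
      · rw [intervalIntegral.integral_undef hI, ← hRHSeq]
        exact intervalIntegral.integral_nonneg_of_ae_restrict ht₁0.le hmajnn
end

section
/- Let α ∈ (0,1), T > 0, b > 0, m ∈ ℕ, and let s : [0,T] → ℝ be absolutely continuous with s(0) = b and ṡ ≥ 0 a.e. Then there exists a constant c₀ depending only on m, b, α, ‖t^{1−α} ṡ‖_{C([0,T])} and T such that for almost every 0 ≤ τ ≤ t ≤ T and all 0 ≤ t₁ ≤ t₂ ≤ T with τ ≤ t₁: (i) |B(τ,t)| ≤ c₀ [s(t) − s(τ)]; (ii) |B_τ(τ,t)| ≤ c₀ ṡ(τ); (iii) |B_t(τ,t)| ≤ c₀ ṡ(t); (iv) |B(τ,t₂) − B(τ,t₁)| ≤ c₀ |s(t₂) − s(t₁)|; (v) |D̃(τ,t)| ≤ c₀ ṡ(τ) [s(t) − s(τ)]; (vi) |D̃_t(τ,t)| ≤ c₀ ṡ(τ) ṡ(t); (vii) |E′(t)| ≤ c₀ ṡ(t). -/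
open MeasureTheory Set Filter
open scoped Topology

/-- Eigenvalues `λ_n(t) = (π / s(t)) (n + 1/2)`. -/
noncomputable def lam (s : ℝ → ℝ) (n : ℕ) (t : ℝ) : ℝ :=
  Real.pi / s t * (n + 1 / 2)

/-- Eigenfunctions `φ_n(x,t) = √(2/s(t)) cos(λ_n(t) x)`. -/
noncomputable def phi (s : ℝ → ℝ) (n : ℕ) (x t : ℝ) : ℝ :=
  Real.sqrt (2 / s t) * Real.cos (lam s n t * x)

/-- `B(τ,t)_{n,k} = ∫₀^{s(τ)} φ_n(x,τ)[φ_k(x,t) − φ_k(x,τ)] dx`. -/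
noncomputable def Bmat (s : ℝ → ℝ) (m : ℕ) (τ t : ℝ) :
    Matrix (Fin (m + 1)) (Fin (m + 1)) ℝ :=
  Matrix.of fun n k : Fin (m + 1) =>
    ∫ x in (0:ℝ)..(s τ), phi s n x τ * (phi s k x t - phi s k x τ)

/-- `D̃(τ,t)_{n,k} = ∫₀^{s(τ)} ∂_τ φ_n(x,τ)[φ_k(x,t) − φ_k(x,τ)] dx`. -/
noncomputable def Dtil (s : ℝ → ℝ) (m : ℕ) (τ t : ℝ) :
    Matrix (Fin (m + 1)) (Fin (m + 1)) ℝ :=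
  Matrix.of fun n k : Fin (m + 1) =>
    ∫ x in (0:ℝ)..(s τ), deriv (fun r => phi s n x r) τ * (phi s k x t - phi s k x τ)

/-- `E(t)_{n,k} = λ_k(t)² δ_{n,k}/Γ(1−α)`. -/
noncomputable def Emat (α : ℝ) (s : ℝ → ℝ) (m : ℕ) (t : ℝ) :
    Matrix (Fin (m + 1)) (Fin (m + 1)) ℝ :=
  Matrix.of fun n k : Fin (m + 1) =>
    if n = k then lam s k t ^ 2 / Real.Gamma (1 - α) else 0

/-!
Substituting `x = s(τ) y` turns every entry of `B(τ,t)` into `2 (Φ(r) - Φ(1))`, where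
`r = s(τ) / s(t)` and `Φ(r) = √r ∫₀¹ cos(μ_n y) cos(μ_k r y) dy` with `μ_j = π (j + 1/2)`;
likewise `D̃(τ,t) = ṡ(τ) (2 / s(τ)) (Ψ(r) - Ψ(1))` for a profile `Ψ` of the same shape.
As `s` is nondecreasing with `b ≤ s ≤ s(T)`, the ratio `r` stays in `[b / s(T), 1]`, where these
profiles are differentiable with bounded derivative. The mean value theorem and the chain rule
then give all the bounds on `B` and `D̃`; `E′` is differentiated explicitly.
-/

open Real intervalIntegral
open scoped Interval

noncomputable section

def DerivBoundedOn (Φ : ℝ → ℝ) (S : Set ℝ) (L : ℝ) : Prop :=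
  ∀ r ∈ S, DifferentiableAt ℝ Φ r ∧ |deriv Φ r| ≤ L

def cosIntegral (w : ℝ → ℝ) (ω r : ℝ) : ℝ := ∫ y in (0:ℝ)..1, w y * cos (ω * r * y)

def overlap (w : ℝ → ℝ) (ω r : ℝ) : ℝ := √r * cosIntegral w ω r

section CosIntegral

variable {w : ℝ → ℝ} {W : ℝ}

lemma abs_cosIntegral_le (hW : ∀ y ∈ Icc (0:ℝ) 1, |w y| ≤ W) (ω r : ℝ) :
    |cosIntegral w ω r| ≤ W := by
  have := norm_integral_le_of_norm_le_const (a := 0) (b := 1)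
    (f := fun y => w y * cos (ω * r * y)) fun y hy => by
      have hwy := hW y (Ioc_subset_Icc_self (uIoc_of_le (zero_le_one (α := ℝ)) ▸ hy))
      calc ‖w y * cos (ω * r * y)‖ = |w y| * |cos (ω * r * y)| := by
            rw [Real.norm_eq_abs, abs_mul]
        _ ≤ W * 1 := by gcongr; exacts [(abs_nonneg _).trans hwy, abs_cos_le_one _]
        _ = W := mul_one W
  simpa [cosIntegral] using this

lemma exists_hasDerivAt_cosIntegral (hw : Continuous w) (hW : ∀ y ∈ Icc (0:ℝ) 1, |w y| ≤ W)
    (ω r : ℝ) : ∃ F', HasDerivAt (cosIntegral w ω) F' r ∧ |F'| ≤ |ω| * W := by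
  set F' : ℝ → ℝ → ℝ := fun x y => w y * (-sin (ω * x * y) * (ω * y))
  have hF'_le : ∀ y ∈ Ι (0:ℝ) 1, ∀ x : ℝ, ‖F' x y‖ ≤ |ω| * W := fun y hy x => by
    obtain ⟨hy0, hy1⟩ := Ioc_subset_Icc_self (uIoc_of_le (zero_le_one (α := ℝ)) ▸ hy)
    have hwy := hW y ⟨hy0, hy1⟩
    calc ‖F' x y‖ = |w y| * (|sin (ω * x * y)| * (|ω| * |y|)) := by
          simp only [F', Real.norm_eq_abs, abs_mul, abs_neg]
      _ ≤ W * (1 * (|ω| * 1)) := by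
          gcongr
          exacts [(abs_nonneg _).trans hwy, abs_sin_le_one _, (abs_of_nonneg hy0).trans_le hy1]
      _ = |ω| * W := by ring
  obtain ⟨-, hderiv⟩ := hasDerivAt_integral_of_dominated_loc_of_deriv_le (bound := fun _ => |ω| * W)
    (F := fun x y => w y * cos (ω * x * y)) (F' := F') (x₀ := r) (a := 0) (b := 1)
    (μ := volume) Filter.univ_mem
    (.of_forall fun x => (by fun_prop : Continuous _).aestronglyMeasurable)
    ((by fun_prop : Continuous (fun y => w y * cos (ω * r * y))).intervalIntegrable 0 1)
    (by fun_prop : Continuous (F' r)).aestronglyMeasurable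
    (.of_forall fun y hy x _ => hF'_le y hy x) intervalIntegrable_const
    (.of_forall fun y _ x _ => by
      simpa [F'] using (((hasDerivAt_id x).const_mul ω).mul_const y).cos.const_mul (w y))
  refine ⟨_, hderiv, ?_⟩
  have := norm_integral_le_of_norm_le_const (a := 0) (b := 1) fun y hy => hF'_le y hy r
  simpa using this

end CosIntegral

lemma derivBoundedOn_overlap {w : ℝ → ℝ} {W ρ : ℝ} (hw : Continuous w)
    (hW : ∀ y ∈ Icc (0:ℝ) 1, |w y| ≤ W) (ω : ℝ) (hρ : 0 < ρ) :
    DerivBoundedOn (overlap w ω) (Icc ρ 1) (W * (1 / (2 * √ρ) + |ω|)) := fun r hr => by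
  obtain ⟨F', hF', hF'_le⟩ := exists_hasDerivAt_cosIntegral hw hW ω r
  have hr0 : 0 < r := hρ.trans_le hr.1
  have h := (hasDerivAt_sqrt hr0.ne').mul hF'
  refine ⟨h.differentiableAt, ?_⟩
  have hsqrt_le : √r ≤ 1 := sqrt_le_one.mpr hr.2
  have hsqrt_ge : √ρ ≤ √r := sqrt_le_sqrt hr.1
  have hW0 : 0 ≤ W := (abs_nonneg _).trans (hW 0 ⟨le_rfl, zero_le_one⟩)
  calc |deriv (overlap w ω) r|
      = |1 / (2 * √r) * cosIntegral w ω r + √r * F'| := congrArg abs h.deriv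
    _ ≤ 1 / (2 * √r) * W + 1 * (|ω| * W) := by
        refine (abs_add_le _ _).trans (add_le_add ?_ ?_) <;>
          rw [abs_mul, abs_of_nonneg (by positivity)]
        · gcongr; exact abs_cosIntegral_le hW ω r
        · gcongr
    _ ≤ 1 / (2 * √ρ) * W + |ω| * W := by rw [one_mul]; gcongr
    _ = W * (1 / (2 * √ρ) + |ω|) := by ring

def freq (n : ℕ) : ℝ := π * (n + 1 / 2)

def mode (ω c x : ℝ) : ℝ := √(2 / c) * cos (ω * (x / c))

def modeRate (ω y : ℝ) : ℝ := -(1 / 2) * cos (ω * y) + ω * y * sin (ω * y)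

lemma lam_eq (s : ℝ → ℝ) (n : ℕ) (t : ℝ) : lam s n t = freq n / s t := by
  unfold lam freq; ring

lemma phi_eq_mode (s : ℝ → ℝ) (n : ℕ) (x t : ℝ) : phi s n x t = mode (freq n) (s t) x := by
  unfold phi mode; rw [lam_eq]; ring_nf

lemma continuous_mode (ω c : ℝ) : Continuous (mode ω c) := by
  unfold mode; fun_prop

lemma hasDerivAt_mode (ω x : ℝ) {c : ℝ} (hc : 0 < c) :
    HasDerivAt (fun c => mode ω c x) (√2 / (c * √c) * modeRate ω (x / c)) c := by
  have h := (((hasDerivAt_inv hc.ne').const_mul 2).sqrt (by positivity)).mul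
    (((hasDerivAt_inv hc.ne').const_mul (ω * x)).cos)
  have hfun : (fun c => mode ω c x) = fun c => √(2 * c⁻¹) * cos (ω * x * c⁻¹) := by
    funext c'; simp only [mode, div_eq_mul_inv]; ring_nf
  rw [hfun]
  refine h.congr_deriv ?_
  have hsc : √c ≠ 0 := (sqrt_pos.mpr hc).ne'
  rw [sqrt_mul zero_le_two, sqrt_inv]
  simp only [modeRate]
  field_simp
  rw [sq_sqrt zero_le_two, sq_sqrt hc.le]

section Overlap

variable {w : ℝ → ℝ} {a A : ℝ}

lemma integral_mul_mode (ω : ℝ) (ha : 0 < a) :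
    ∫ x in (0:ℝ)..a, w (x / a) * mode ω A x = √(2 * a) * overlap w ω (a / A) := by
  have hsub := smul_integral_comp_mul_left (a := 0) (b := 1)
    (fun x => w (x / a) * mode ω A x) a
  rw [mul_zero, mul_one] at hsub
  have hcoef : √(2 * a) * √(a / A) = a * √(2 / A) := by
    rw [← sqrt_mul (by positivity), show 2 * a * (a / A) = a ^ 2 * (2 / A) by ring,
      sqrt_mul (by positivity), sqrt_sq ha.le]
  rw [← hsub, smul_eq_mul, overlap, cosIntegral, ← mul_assoc, hcoef, mul_assoc]
  congr 1
  rw [← intervalIntegral.integral_const_mul]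
  refine intervalIntegral.integral_congr fun y _ => ?_
  simp only [mode]
  rw [mul_div_cancel_left₀ y ha.ne']
  ring_nf

lemma integral_mul_mode_sub (hw : Continuous w) (C ω : ℝ) (ha : 0 < a) :
    ∫ x in (0:ℝ)..a, C * w (x / a) * (mode ω A x - mode ω a x)
      = C * √(2 * a) * (overlap w ω (a / A) - overlap w ω 1) := by
  have hint : ∀ c, IntervalIntegrable (fun x => w (x / a) * mode ω c x) volume 0 a := fun c =>
    (by have := continuous_mode ω c; fun_prop : Continuous _).intervalIntegrable 0 a
  calc ∫ x in (0:ℝ)..a, C * w (x / a) * (mode ω A x - mode ω a x)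
      = C * ((∫ x in (0:ℝ)..a, w (x / a) * mode ω A x)
          - ∫ x in (0:ℝ)..a, w (x / a) * mode ω a x) := by
        rw [← integral_sub (hint A) (hint a), ← intervalIntegral.integral_const_mul]
        exact intervalIntegral.integral_congr fun x _ => by ring
    _ = C * √(2 * a) * (overlap w ω (a / A) - overlap w ω 1) := by
        rw [integral_mul_mode ω ha, integral_mul_mode ω ha, div_self ha.ne']
        ring

end Overlap

def modeOverlap (n k : ℕ) : ℝ → ℝ := overlap (fun y => cos (freq n * y)) (freq k)

def modeRateOverlap (n k : ℕ) : ℝ → ℝ := overlap (modeRate (freq n)) (freq k)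

section Entries

variable {s : ℝ → ℝ} {m : ℕ} {τ : ℝ}

lemma Bmat_apply_eq (t : ℝ) (n k : Fin (m + 1)) (hτ : 0 < s τ) :
    Bmat s m τ t n k = 2 * (modeOverlap n k (s τ / s t) - modeOverlap n k 1) := by
  have hcoef : √(2 / s τ) * √(2 * s τ) = 2 := by
    rw [← sqrt_mul (by positivity), show 2 / s τ * (2 * s τ) = 2 ^ 2 by field_simp,
      sqrt_sq zero_le_two]
  simp only [Bmat, Matrix.of_apply, phi_eq_mode]
  rw [← hcoef, modeOverlap, ← integral_mul_mode_sub (by fun_prop) _ _ hτ]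
  rfl

lemma Dtil_apply_eq {s' : ℝ → ℝ} (t : ℝ) (n k : Fin (m + 1)) (hd : HasDerivAt s (s' τ) τ)
    (hτ : 0 < s τ) :
    Dtil s m τ t n k
      = s' τ * (2 / s τ) * (modeRateOverlap n k (s τ / s t) - modeRateOverlap n k 1) := by
  have hcoef : √2 / (s τ * √(s τ)) * √(2 * s τ) = 2 / s τ := by
    have := (sqrt_pos.mpr hτ).ne'
    rw [sqrt_mul zero_le_two]
    field_simp
    rw [sq_sqrt zero_le_two]
  have hderiv (x : ℝ) : deriv (fun r => mode (freq n) (s r) x) τ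
      = s' τ * (√2 / (s τ * √(s τ))) * modeRate (freq n) (x / s τ) :=
    ((hasDerivAt_mode (freq n) x hτ).comp τ hd).deriv.trans (by ring)
  simp only [Dtil, Matrix.of_apply, phi_eq_mode, hderiv]
  rw [integral_mul_mode_sub (by unfold modeRate; fun_prop) _ _ hτ, mul_assoc (s' τ), hcoef]
  rfl

end Entries

def overlapBound (m : ℕ) (b M : ℝ) : ℝ := (1 / 2 + freq m) * (1 / (2 * √(b / M)) + freq m)

lemma one_half_le_freq (n : ℕ) : 1 / 2 ≤ freq n := by
  unfold freq; nlinarith [pi_gt_three, (Nat.cast_nonneg n : (0:ℝ) ≤ n)]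

lemma freq_le_freq {n m : ℕ} (h : n ≤ m) : freq n ≤ freq m := by
  unfold freq; gcongr

lemma overlapBound_pos (m : ℕ) (b M : ℝ) : 0 < overlapBound m b M := by
  have := one_half_le_freq m
  unfold overlapBound; positivity

lemma abs_modeRate_le {ω y : ℝ} (hω : 0 ≤ ω) (hy : y ∈ Icc (0:ℝ) 1) :
    |modeRate ω y| ≤ 1 / 2 + ω := by
  unfold modeRate
  calc |-(1 / 2) * cos (ω * y) + ω * y * sin (ω * y)|
      ≤ 1 / 2 * |cos (ω * y)| + ω * |y| * |sin (ω * y)| := by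
        refine (abs_add_le _ _).trans_eq ?_
        rw [abs_mul, abs_mul, abs_mul, abs_neg, abs_of_pos one_half_pos, abs_of_nonneg hω]
    _ ≤ 1 / 2 * 1 + ω * 1 * 1 := by
        gcongr
        exacts [abs_cos_le_one _, (abs_of_nonneg hy.1).trans_le hy.2, abs_sin_le_one _]
    _ = 1 / 2 + ω := by ring

section OverlapBound

variable {m n k : ℕ} {b M : ℝ}

lemma derivBoundedOn_overlap_freq {w : ℝ → ℝ} (hw : Continuous w)
    (hW : ∀ y ∈ Icc (0:ℝ) 1, |w y| ≤ 1 / 2 + freq m) (hk : k ≤ m) (hb : 0 < b) (hbM : b ≤ M) :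
    DerivBoundedOn (overlap w (freq k)) (Icc (b / M) 1) (overlapBound m b M) := fun r hr => by
  refine (derivBoundedOn_overlap hw hW _ (div_pos hb (hb.trans_le hbM)) r hr).imp_right
    fun h => h.trans ?_
  rw [abs_of_nonneg (by linarith [one_half_le_freq k] : 0 ≤ freq k), overlapBound]
  have := freq_le_freq hk
  have := one_half_le_freq m
  gcongr

lemma derivBoundedOn_modeOverlap (n : ℕ) (hk : k ≤ m) (hb : 0 < b) (hbM : b ≤ M) :
    DerivBoundedOn (modeOverlap n k) (Icc (b / M) 1) (overlapBound m b M) :=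
  derivBoundedOn_overlap_freq (by fun_prop) (fun y _ => (abs_cos_le_one _).trans
    (by linarith [one_half_le_freq m])) hk hb hbM

lemma derivBoundedOn_modeRateOverlap (hn : n ≤ m) (hk : k ≤ m) (hb : 0 < b) (hbM : b ≤ M) :
    DerivBoundedOn (modeRateOverlap n k) (Icc (b / M) 1) (overlapBound m b M) :=
  derivBoundedOn_overlap_freq (by unfold modeRate; fun_prop)
    (fun y hy => (abs_modeRate_le (by linarith [one_half_le_freq n]) hy).trans
      (by linarith [freq_le_freq hn]))
    hk hb hbM

end OverlapBound

lemma div_mem_Icc_div_one {b M a A : ℝ} (hb : 0 < b) (ha : b ≤ a) (haA : a ≤ A) (hAM : A ≤ M) :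
    a / A ∈ Icc (b / M) 1 :=
  ⟨div_le_div₀ (hb.le.trans ha) ha (hb.trans_le (ha.trans haA)) hAM,
    div_le_one_of_le₀ haA (hb.le.trans (ha.trans haA))⟩

namespace DerivBoundedOn

variable {Φ : ℝ → ℝ} {L b M a A : ℝ}

lemma abs_sub_comp_div_le (hΦ : DerivBoundedOn Φ (Icc (b / M) 1) L) (hb : 0 < b)
    {A₁ A₂ : ℝ} (ha : b ≤ a) (h₁ : a ≤ A₁) (h₂ : a ≤ A₂) (h₁M : A₁ ≤ M) (h₂M : A₂ ≤ M) :
    |Φ (a / A₂) - Φ (a / A₁)| ≤ L / b * |A₂ - A₁| := by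
  have hmem₁ := div_mem_Icc_div_one hb ha h₁ h₁M
  have hL : 0 ≤ L := (abs_nonneg _).trans (hΦ _ hmem₁).2
  have hA₁ : 0 < A₁ := hb.trans_le (ha.trans h₁)
  have hA₂ : 0 < A₂ := hb.trans_le (ha.trans h₂)
  have hmvt := (convex_Icc (b / M) 1).norm_image_sub_le_of_norm_deriv_le
    (fun r hr => (hΦ r hr).1) (fun r hr => (hΦ r hr).2) hmem₁ (div_mem_Icc_div_one hb ha h₂ h₂M)
  have hratio : |a / A₂ - a / A₁| ≤ |A₂ - A₁| / b := by
    rw [show a / A₂ - a / A₁ = a / A₁ * ((A₁ - A₂) / A₂) by field_simp, abs_mul,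
      abs_of_nonneg (div_nonneg (hb.le.trans ha) hA₁.le), abs_div, abs_of_pos hA₂, abs_sub_comm]
    calc a / A₁ * (|A₂ - A₁| / A₂) ≤ 1 * (|A₂ - A₁| / b) := by
          gcongr
          exacts [div_le_one_of_le₀ h₁ hA₁.le, ha.trans h₂]
      _ = |A₂ - A₁| / b := one_mul _
  calc |Φ (a / A₂) - Φ (a / A₁)| ≤ L * |a / A₂ - a / A₁| := hmvt
    _ ≤ L * (|A₂ - A₁| / b) := by gcongr
    _ = L / b * |A₂ - A₁| := by ring

lemma exists_hasDerivAt_comp_div_const (hΦ : DerivBoundedOn Φ (Icc (b / M) 1) L) (hb : 0 < b)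
    {f : ℝ → ℝ} {f' τ : ℝ} (hf : HasDerivAt f f' τ) (hf' : 0 ≤ f') (ha : b ≤ f τ)
    (haA : f τ ≤ A) (hAM : A ≤ M) :
    ∃ D, HasDerivAt (fun r => Φ (f r / A)) D τ ∧ |D| ≤ L / b * f' := by
  have hΦτ := hΦ _ (div_mem_Icc_div_one hb ha haA hAM)
  refine ⟨_, hΦτ.1.hasDerivAt.comp τ (hf.div_const A), ?_⟩
  have hA : 0 < A := hb.trans_le (ha.trans haA)
  calc |deriv Φ (f τ / A) * (f' / A)| = |deriv Φ (f τ / A)| * (f' / A) := by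
        rw [abs_mul, abs_of_nonneg (div_nonneg hf' hA.le)]
    _ ≤ L * (f' / b) := mul_le_mul hΦτ.2 (div_le_div_of_nonneg_left hf' hb (ha.trans haA))
        (by positivity) ((abs_nonneg _).trans hΦτ.2)
    _ = L / b * f' := by ring

lemma exists_hasDerivAt_comp_const_div (hΦ : DerivBoundedOn Φ (Icc (b / M) 1) L) (hb : 0 < b)
    {f : ℝ → ℝ} {f' t : ℝ} (hf : HasDerivAt f f' t) (hf' : 0 ≤ f') (ha : b ≤ a)
    (haA : a ≤ f t) (hAM : f t ≤ M) :
    ∃ D, HasDerivAt (fun r => Φ (a / f r)) D t ∧ |D| ≤ L / b * f' := by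
  have hΦt := hΦ _ (div_mem_Icc_div_one hb ha haA hAM)
  have hA : 0 < f t := hb.trans_le (ha.trans haA)
  refine ⟨_, hΦt.1.hasDerivAt.comp t ((hasDerivAt_const t a).div hf hA.ne'), ?_⟩
  have hratio : a / f t ^ 2 ≤ 1 / b := by
    rw [sq, ← div_div]
    exact (div_le_div_of_nonneg_right (div_le_one_of_le₀ haA hA.le) hA.le).trans
      (div_le_div_of_nonneg_left zero_le_one hb (ha.trans haA))
  calc |deriv Φ (a / f t) * ((0 * f t - a * f') / f t ^ 2)|
      = |deriv Φ (a / f t)| * (a / f t ^ 2 * f') := by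
        rw [abs_mul, zero_mul, zero_sub, neg_div, abs_neg, abs_div, abs_mul,
          abs_of_nonneg (hb.le.trans ha), abs_of_nonneg hf', abs_of_pos (pow_pos hA 2)]
        ring
    _ ≤ L * (1 / b * f') := mul_le_mul hΦt.2 (by gcongr)
        (mul_nonneg (div_nonneg (hb.le.trans ha) (by positivity)) hf')
        ((abs_nonneg _).trans hΦt.2)
    _ = L / b * f' := by ring

end DerivBoundedOn

structure IsAdmissibleBoundary (s s' : ℝ → ℝ) (b T : ℝ) : Prop where
  monotoneOn : MonotoneOn s (Icc 0 T)
  le_apply : ∀ t ∈ Icc 0 T, b ≤ s t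
  hasDerivAt : ∀ t ∈ Ioo 0 T, HasDerivAt s (s' t) t
  deriv_nonneg : ∀ t ∈ Icc 0 T, 0 ≤ s' t

lemma continuousAt_of_continuousOn_rpow_mul {f : ℝ → ℝ} {p T t : ℝ}
    (hf : ContinuousOn (fun t => t ^ p * f t) (Icc 0 T)) (ht : t ∈ Ioo 0 T) :
    ContinuousAt f t := by
  have hrpow : ContinuousAt (fun r : ℝ => (r ^ p)⁻¹) t :=
    (continuousAt_rpow_const t p (Or.inl ht.1.ne')).inv₀ (rpow_pos_of_pos ht.1 p).ne'
  refine (hrpow.mul (hf.continuousAt (Icc_mem_nhds ht.1 ht.2))).congr ?_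
  filter_upwards [eventually_gt_nhds ht.1] with r hr
  simp only [Pi.mul_apply]
  rw [← mul_assoc, inv_mul_cancel₀ (rpow_pos_of_pos hr p).ne', one_mul]

namespace IsAdmissibleBoundary

variable {s s' : ℝ → ℝ} {b T : ℝ}

lemma of_integral {p : ℝ} (hs'int : IntegrableOn s' (Icc 0 T))
    (hsAC : ∀ t ∈ Icc (0:ℝ) T, s t = b + ∫ τ in (0:ℝ)..t, s' τ)
    (hs'pos : ∀ t ∈ Icc (0:ℝ) T, 0 ≤ s' t)
    (hs'cont : ContinuousOn (fun t : ℝ => t ^ p * s' t) (Icc 0 T)) :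
    IsAdmissibleBoundary s s' b T := by
  have hint {u v : ℝ} (hu : u ∈ Icc 0 T) (hv : v ∈ Icc 0 T) : IntervalIntegrable s' volume u v :=
    (hs'int.mono_set (uIcc_subset_Icc hu hv)).intervalIntegrable
  have hsub {u v : ℝ} (hu : u ∈ Icc 0 T) (hv : v ∈ Icc 0 T) : s v - s u = ∫ x in u..v, s' x := by
    have h0 : (0:ℝ) ∈ Icc 0 T := ⟨le_rfl, hu.1.trans hu.2⟩
    rw [hsAC u hu, hsAC v hv, add_sub_add_left_eq_sub,
      integral_interval_sub_left (hint h0 hv) (hint h0 hu)]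
  refine ⟨fun u hu v hv huv => ?_, fun t ht => ?_, fun t ht => ?_, hs'pos⟩
  · have := integral_nonneg (μ := volume) huv fun x hx =>
      hs'pos x ⟨hu.1.trans hx.1, hx.2.trans hv.2⟩
    linarith [hsub hu hv]
  · have := integral_nonneg (μ := volume) ht.1 fun x hx => hs'pos x ⟨hx.1, hx.2.trans ht.2⟩
    linarith [hsAC t ht]
  · -- `s'` is continuous on `(0, T)`, so the fundamental theorem of calculus holds at every `t`.
    have hnhds : Icc 0 T ∈ 𝓝 t := Icc_mem_nhds ht.1 ht.2
    have hftc := integral_hasDerivAt_right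
      (hint ⟨le_rfl, ht.1.le.trans ht.2.le⟩ (Ioo_subset_Icc_self ht))
      ⟨Icc 0 T, hnhds, hs'int.aestronglyMeasurable⟩
      (continuousAt_of_continuousOn_rpow_mul hs'cont ht)
    refine (hftc.const_add b).congr_of_eventuallyEq ?_
    filter_upwards [hnhds] with r hr using hsAC r hr

variable {c t : ℝ} {m : ℕ}

lemma apply_le_apply_right (hs : IsAdmissibleBoundary s s' b T) (ht : t ∈ Icc 0 T) :
    s t ≤ s T :=
  hs.monotoneOn ht ⟨ht.1.trans ht.2, le_rfl⟩ ht.2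

lemma le_apply_right (hs : IsAdmissibleBoundary s s' b T) (ht : t ∈ Icc 0 T) : b ≤ s T :=
  (hs.le_apply t ht).trans (hs.apply_le_apply_right ht)

lemma abs_Bmat_sub_le (hs : IsAdmissibleBoundary s s' b T) (hb : 0 < b)
    (hc : 2 * overlapBound m b (s T) / b ≤ c) {τ t₁ t₂ : ℝ} (hτ : 0 ≤ τ) (h₁ : τ ≤ t₁)
    (h₂ : τ ≤ t₂) (h₁T : t₁ ≤ T) (h₂T : t₂ ≤ T) (n k : Fin (m + 1)) :
    |Bmat s m τ t₂ n k - Bmat s m τ t₁ n k| ≤ c * |s t₂ - s t₁| := by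
  have hτI : τ ∈ Icc 0 T := ⟨hτ, h₁.trans h₁T⟩
  have ht₁ : t₁ ∈ Icc 0 T := ⟨hτ.trans h₁, h₁T⟩
  have ht₂ : t₂ ∈ Icc 0 T := ⟨hτ.trans h₂, h₂T⟩
  have hsτ := hs.le_apply τ hτI
  have hlip := (derivBoundedOn_modeOverlap n k.is_le hb (hs.le_apply_right hτI)).abs_sub_comp_div_le
    hb hsτ (hs.monotoneOn hτI ht₁ h₁) (hs.monotoneOn hτI ht₂ h₂)
    (hs.apply_le_apply_right ht₁) (hs.apply_le_apply_right ht₂)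
  rw [Bmat_apply_eq _ _ _ (hb.trans_le hsτ), Bmat_apply_eq _ _ _ (hb.trans_le hsτ),
    ← mul_sub, sub_sub_sub_cancel_right, abs_mul, abs_two]
  calc 2 * |modeOverlap n k (s τ / s t₂) - modeOverlap n k (s τ / s t₁)|
      ≤ 2 * (overlapBound m b (s T) / b * |s t₂ - s t₁|) := by gcongr
    _ = 2 * overlapBound m b (s T) / b * |s t₂ - s t₁| := by ring
    _ ≤ c * |s t₂ - s t₁| := by gcongr

lemma abs_Bmat_le (hs : IsAdmissibleBoundary s s' b T) (hb : 0 < b)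
    (hc : 2 * overlapBound m b (s T) / b ≤ c) {τ : ℝ} (hτ : 0 ≤ τ) (hτt : τ ≤ t) (htT : t ≤ T)
    (n k : Fin (m + 1)) : |Bmat s m τ t n k| ≤ c * (s t - s τ) := by
  have hBτ : Bmat s m τ τ n k = 0 := by simp [Bmat]
  have hmono : s τ ≤ s t := hs.monotoneOn ⟨hτ, hτt.trans htT⟩ ⟨hτ.trans hτt, htT⟩ hτt
  simpa [hBτ, abs_of_nonneg (sub_nonneg.mpr hmono)] using
    hs.abs_Bmat_sub_le hb hc hτ le_rfl hτt (hτt.trans htT) htT n k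

lemma abs_deriv_Bmat_left_le (hs : IsAdmissibleBoundary s s' b T) (hb : 0 < b)
    (hc : 2 * overlapBound m b (s T) / b ≤ c) {τ : ℝ} (hτ : τ ∈ Ioo 0 T) (hτt : τ ≤ t)
    (htT : t ≤ T) (n k : Fin (m + 1)) :
    |deriv (fun r => Bmat s m r t n k) τ| ≤ c * s' τ := by
  have hτI : τ ∈ Icc 0 T := Ioo_subset_Icc_self hτ
  have htI : t ∈ Icc 0 T := ⟨hτI.1.trans hτt, htT⟩
  have hs'τ := hs.deriv_nonneg τ hτI
  obtain ⟨D, hD, hD_le⟩ :=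
    (derivBoundedOn_modeOverlap n k.is_le hb
      (hs.le_apply_right htI)).exists_hasDerivAt_comp_div_const
      hb (hs.hasDerivAt τ hτ) hs'τ (hs.le_apply τ hτI) (hs.monotoneOn hτI htI hτt)
      (hs.apply_le_apply_right htI)
  have heq : (fun r => Bmat s m r t n k) =ᶠ[𝓝 τ]
      fun r => 2 * (modeOverlap n k (s r / s t) - modeOverlap n k 1) := by
    filter_upwards [Ioo_mem_nhds hτ.1 hτ.2] with r hr
    exact Bmat_apply_eq t n k (hb.trans_le (hs.le_apply r (Ioo_subset_Icc_self hr)))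
  rw [heq.deriv_eq, ((hD.sub_const _).const_mul 2).deriv, abs_mul, abs_two]
  calc 2 * |D| ≤ 2 * (overlapBound m b (s T) / b * s' τ) := by gcongr
    _ = 2 * overlapBound m b (s T) / b * s' τ := by ring
    _ ≤ c * s' τ := by gcongr

lemma abs_deriv_Bmat_right_le (hs : IsAdmissibleBoundary s s' b T) (hb : 0 < b)
    (hc : 2 * overlapBound m b (s T) / b ≤ c) {τ : ℝ} (hτ : 0 ≤ τ) (hτt : τ ≤ t)
    (ht : t ∈ Ioo 0 T) (n k : Fin (m + 1)) :
    |deriv (fun r => Bmat s m τ r n k) t| ≤ c * s' t := by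
  have htI : t ∈ Icc 0 T := Ioo_subset_Icc_self ht
  have hτI : τ ∈ Icc 0 T := ⟨hτ, hτt.trans htI.2⟩
  have hs't := hs.deriv_nonneg t htI
  have hsτ := hs.le_apply τ hτI
  obtain ⟨D, hD, hD_le⟩ :=
    (derivBoundedOn_modeOverlap n k.is_le hb
      (hs.le_apply_right htI)).exists_hasDerivAt_comp_const_div
      hb (hs.hasDerivAt t ht) hs't hsτ (hs.monotoneOn hτI htI hτt) (hs.apply_le_apply_right htI)
  have heq : (fun r => Bmat s m τ r n k) =ᶠ[𝓝 t]
      fun r => 2 * (modeOverlap n k (s τ / s r) - modeOverlap n k 1) :=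
    .of_forall fun r => Bmat_apply_eq r n k (hb.trans_le hsτ)
  rw [heq.deriv_eq, ((hD.sub_const _).const_mul 2).deriv, abs_mul, abs_two]
  calc 2 * |D| ≤ 2 * (overlapBound m b (s T) / b * s' t) := by gcongr
    _ = 2 * overlapBound m b (s T) / b * s' t := by ring
    _ ≤ c * s' t := by gcongr

lemma abs_Dtil_le (hs : IsAdmissibleBoundary s s' b T) (hb : 0 < b)
    (hc : 2 * overlapBound m b (s T) / b ^ 2 ≤ c) {τ : ℝ} (hτ : τ ∈ Ioo 0 T) (hτt : τ ≤ t)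
    (htT : t ≤ T) (n k : Fin (m + 1)) : |Dtil s m τ t n k| ≤ c * s' τ * (s t - s τ) := by
  have hτI : τ ∈ Icc 0 T := Ioo_subset_Icc_self hτ
  have htI : t ∈ Icc 0 T := ⟨hτI.1.trans hτt, htT⟩
  have hs'τ := hs.deriv_nonneg τ hτI
  have hsτ := hs.le_apply τ hτI
  have hτ0 : 0 < s τ := hb.trans_le hsτ
  have hmono := hs.monotoneOn hτI htI hτt
  have hlip := (derivBoundedOn_modeRateOverlap n.is_le k.is_le hb
    (hs.le_apply_right hτI)).abs_sub_comp_div_le hb hsτ le_rfl hmono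
    (hs.apply_le_apply_right hτI) (hs.apply_le_apply_right htI)
  rw [div_self hτ0.ne', abs_of_nonneg (sub_nonneg.mpr hmono)] at hlip
  rw [Dtil_apply_eq t n k (hs.hasDerivAt τ hτ) hτ0, abs_mul, abs_mul, abs_of_nonneg hs'τ,
    abs_of_pos (by positivity)]
  calc s' τ * (2 / s τ) * |modeRateOverlap n k (s τ / s t) - modeRateOverlap n k 1|
      ≤ s' τ * (2 / b) * (overlapBound m b (s T) / b * (s t - s τ)) := by gcongr
    _ = 2 * overlapBound m b (s T) / b ^ 2 * s' τ * (s t - s τ) := by ring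
    _ ≤ c * s' τ * (s t - s τ) := by gcongr

lemma abs_deriv_Dtil_right_le (hs : IsAdmissibleBoundary s s' b T) (hb : 0 < b)
    (hc : 2 * overlapBound m b (s T) / b ^ 2 ≤ c) {τ : ℝ} (hτ : τ ∈ Ioo 0 T) (hτt : τ ≤ t)
    (ht : t ∈ Ioo 0 T) (n k : Fin (m + 1)) :
    |deriv (fun r => Dtil s m τ r n k) t| ≤ c * s' τ * s' t := by
  have hτI : τ ∈ Icc 0 T := Ioo_subset_Icc_self hτ
  have htI : t ∈ Icc 0 T := Ioo_subset_Icc_self ht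
  have hs'τ := hs.deriv_nonneg τ hτI
  have hs't := hs.deriv_nonneg t htI
  have hsτ := hs.le_apply τ hτI
  have hτ0 : 0 < s τ := hb.trans_le hsτ
  obtain ⟨D, hD, hD_le⟩ := (derivBoundedOn_modeRateOverlap n.is_le k.is_le hb
    (hs.le_apply_right htI)).exists_hasDerivAt_comp_const_div hb (hs.hasDerivAt t ht) hs't hsτ
      (hs.monotoneOn hτI htI hτt) (hs.apply_le_apply_right htI)
  have heq : (fun r => Dtil s m τ r n k) =ᶠ[𝓝 t] fun r =>
      s' τ * (2 / s τ) * (modeRateOverlap n k (s τ / s r) - modeRateOverlap n k 1) :=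
    .of_forall fun r => Dtil_apply_eq r n k (hs.hasDerivAt τ hτ) hτ0
  rw [heq.deriv_eq, ((hD.sub_const _).const_mul _).deriv, abs_mul, abs_mul, abs_of_nonneg hs'τ,
    abs_of_pos (by positivity)]
  calc s' τ * (2 / s τ) * |D| ≤ s' τ * (2 / b) * (overlapBound m b (s T) / b * s' t) := by gcongr
    _ = 2 * overlapBound m b (s T) / b ^ 2 * s' τ * s' t := by ring
    _ ≤ c * s' τ * s' t := by gcongr

lemma abs_deriv_Emat_le {α : ℝ} (hs : IsAdmissibleBoundary s s' b T) (hb : 0 < b)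
    (hc : 2 * freq m ^ 2 / b ^ 3 * |Real.Gamma (1 - α)|⁻¹ ≤ c) (ht : t ∈ Ioo 0 T)
    (n k : Fin (m + 1)) : |deriv (fun r => Emat α s m r n k) t| ≤ c * s' t := by
  have htI : t ∈ Icc 0 T := Ioo_subset_Icc_self ht
  have hs't := hs.deriv_nonneg t htI
  have hst := hs.le_apply t htI
  have hc0 : 0 ≤ c := le_trans (by positivity) hc
  by_cases hnk : n = k
  · subst hnk
    have hD : HasDerivAt (fun r => (freq n / s r) ^ 2 / Real.Gamma (1 - α))
        (-(2 * freq n ^ 2 / s t ^ 3 * s' t) / Real.Gamma (1 - α)) t :=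
      ((((hasDerivAt_const t (freq n)).div (hs.hasDerivAt t ht)
        (hb.trans_le hst).ne').pow 2).div_const _).congr_deriv (by simp only [Pi.div_apply]; ring)
    simp only [Emat, Matrix.of_apply, if_pos, lam_eq]
    have hst0 : 0 < s t := hb.trans_le hst
    have hfreq := freq_le_freq n.is_le
    have := one_half_le_freq n
    rw [hD.deriv, abs_div, abs_neg, abs_of_nonneg (by positivity), div_eq_mul_inv]
    calc 2 * freq n ^ 2 / s t ^ 3 * s' t * |Real.Gamma (1 - α)|⁻¹
        = 2 * freq n ^ 2 / s t ^ 3 * |Real.Gamma (1 - α)|⁻¹ * s' t := by ring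
      _ ≤ 2 * freq m ^ 2 / b ^ 3 * |Real.Gamma (1 - α)|⁻¹ * s' t := by gcongr
      _ ≤ c * s' t := by gcongr
  · simp only [Emat, Matrix.of_apply, if_neg hnk, deriv_const, abs_zero]
    positivity

end IsAdmissibleBoundary

end

theorem stmt_13_general (α T b : ℝ) (m : ℕ) (hb : 0 < b)
    (s s' : ℝ → ℝ)
    (hs'int : IntegrableOn s' (Set.Icc 0 T))
    (hsAC : ∀ t ∈ Set.Icc (0:ℝ) T, s t = b + ∫ τ in (0:ℝ)..t, s' τ)
    (hs'pos : ∀ t ∈ Set.Icc (0:ℝ) T, 0 ≤ s' t)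
    (hs'cont : ContinuousOn (fun t : ℝ => t ^ (1 - α) * s' t) (Set.Icc 0 T)) :
    ∃ c₀ > (0:ℝ),
      (∀ τ t : ℝ, 0 ≤ τ → τ ≤ t → t ≤ T → ∀ n k : Fin (m + 1),
        |Bmat s m τ t n k| ≤ c₀ * (s t - s τ)) ∧
      (∀ t ∈ Set.Icc (0:ℝ) T, ∀ᵐ τ ∂(volume.restrict (Set.Ioo 0 t)), ∀ n k : Fin (m + 1),
        |deriv (fun r => Bmat s m r t n k) τ| ≤ c₀ * s' τ) ∧
      (∀ τ ∈ Set.Icc (0:ℝ) T, ∀ᵐ t ∂(volume.restrict (Set.Ioo τ T)), ∀ n k : Fin (m + 1),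
        |deriv (fun r => Bmat s m τ r n k) t| ≤ c₀ * s' t) ∧
      (∀ τ t₁ t₂ : ℝ, 0 ≤ τ → τ ≤ t₁ → t₁ ≤ t₂ → t₂ ≤ T → ∀ n k : Fin (m + 1),
        |Bmat s m τ t₂ n k - Bmat s m τ t₁ n k| ≤ c₀ * |s t₂ - s t₁|) ∧
      (∀ᵐ τ ∂(volume.restrict (Set.Ioo 0 T)), ∀ t : ℝ, τ ≤ t → t ≤ T → ∀ n k : Fin (m + 1),
        |Dtil s m τ t n k| ≤ c₀ * s' τ * (s t - s τ)) ∧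
      (∀ᵐ τ ∂(volume.restrict (Set.Ioo 0 T)), ∀ᵐ t ∂(volume.restrict (Set.Ioo τ T)),
        ∀ n k : Fin (m + 1),
        |deriv (fun r => Dtil s m τ r n k) t| ≤ c₀ * s' τ * s' t) ∧
      (∀ᵐ t ∂(volume.restrict (Set.Ioo 0 T)), ∀ n k : Fin (m + 1),
        |deriv (fun r => Emat α s m r n k) t| ≤ c₀ * s' t) := by
  have hs := IsAdmissibleBoundary.of_integral hs'int hsAC hs'pos hs'cont
  have hL := overlapBound_pos m b (s T)
  set L := overlapBound m b (s T)
  set C := 2 * freq m ^ 2 / b ^ 3 * |Real.Gamma (1 - α)|⁻¹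
  set c₀ := max (2 * L / b) (max (2 * L / b ^ 2) C)
  have hc₁ : 2 * L / b ≤ c₀ := le_max_left _ _
  have hc₂ : 2 * L / b ^ 2 ≤ c₀ := (le_max_left _ _).trans (le_max_right _ _)
  have hc₃ : C ≤ c₀ := (le_max_right _ _).trans (le_max_right _ _)
  refine ⟨c₀, lt_max_of_lt_left (by positivity),
    fun τ t hτ hτt htT n k => hs.abs_Bmat_le hb hc₁ hτ hτt htT n k,
    fun t ht => ae_restrict_of_forall_mem measurableSet_Ioo fun τ hτ n k =>
      hs.abs_deriv_Bmat_left_le hb hc₁ ⟨hτ.1, hτ.2.trans_le ht.2⟩ hτ.2.le ht.2 n k,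
    fun τ hτ => ae_restrict_of_forall_mem measurableSet_Ioo fun t ht n k =>
      hs.abs_deriv_Bmat_right_le hb hc₁ hτ.1 ht.1.le ⟨hτ.1.trans_lt ht.1, ht.2⟩ n k,
    fun τ t₁ t₂ hτ h₁ h₁₂ h₂ n k =>
      hs.abs_Bmat_sub_le hb hc₁ hτ h₁ (h₁.trans h₁₂) (h₁₂.trans h₂) h₂ n k,
    ae_restrict_of_forall_mem measurableSet_Ioo fun τ hτ t hτt htT n k =>
      hs.abs_Dtil_le hb hc₂ hτ hτt htT n k,
    ae_restrict_of_forall_mem measurableSet_Ioo fun τ hτ =>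
      ae_restrict_of_forall_mem measurableSet_Ioo fun t ht n k =>
        hs.abs_deriv_Dtil_right_le hb hc₂ hτ ht.1.le ⟨hτ.1.trans ht.1, ht.2⟩ n k,
    ae_restrict_of_forall_mem measurableSet_Ioo fun t ht n k =>
      hs.abs_deriv_Emat_le hb hc₃ ht n k⟩

/-- Entrywise bounds on `B`, its partial derivatives, `D̃`, `D̃_t` and `E′`
in terms of `ṡ` (a.e. where the derivatives exist), with a constant `c₀` depending only on
`m, b, α, ‖t^{1-α}ṡ‖_{C([0,T])}` and `T`. -/
theorem stmt_13 (α T b : ℝ) (m : ℕ) (hα : α ∈ Set.Ioo (0:ℝ) 1) (hT : 0 < T) (hb : 0 < b)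
    (s s' : ℝ → ℝ)
    (hs'int : IntegrableOn s' (Set.Icc 0 T))
    (hsAC : ∀ t ∈ Set.Icc (0:ℝ) T, s t = b + ∫ τ in (0:ℝ)..t, s' τ)
    (hs'pos : ∀ t ∈ Set.Icc (0:ℝ) T, 0 ≤ s' t)
    (hs'cont : ContinuousOn (fun t : ℝ => t ^ (1 - α) * s' t) (Set.Icc 0 T)) :
    ∃ c₀ > (0:ℝ),
      (∀ τ t : ℝ, 0 ≤ τ → τ ≤ t → t ≤ T → ∀ n k : Fin (m + 1),
        |Bmat s m τ t n k| ≤ c₀ * (s t - s τ)) ∧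
      (∀ t ∈ Set.Icc (0:ℝ) T, ∀ᵐ τ ∂(volume.restrict (Set.Ioo 0 t)), ∀ n k : Fin (m + 1),
        |deriv (fun r => Bmat s m r t n k) τ| ≤ c₀ * s' τ) ∧
      (∀ τ ∈ Set.Icc (0:ℝ) T, ∀ᵐ t ∂(volume.restrict (Set.Ioo τ T)), ∀ n k : Fin (m + 1),
        |deriv (fun r => Bmat s m τ r n k) t| ≤ c₀ * s' t) ∧
      (∀ τ t₁ t₂ : ℝ, 0 ≤ τ → τ ≤ t₁ → t₁ ≤ t₂ → t₂ ≤ T → ∀ n k : Fin (m + 1),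
        |Bmat s m τ t₂ n k - Bmat s m τ t₁ n k| ≤ c₀ * |s t₂ - s t₁|) ∧
      (∀ᵐ τ ∂(volume.restrict (Set.Ioo 0 T)), ∀ t : ℝ, τ ≤ t → t ≤ T → ∀ n k : Fin (m + 1),
        |Dtil s m τ t n k| ≤ c₀ * s' τ * (s t - s τ)) ∧
      (∀ᵐ τ ∂(volume.restrict (Set.Ioo 0 T)), ∀ᵐ t ∂(volume.restrict (Set.Ioo τ T)),
        ∀ n k : Fin (m + 1),
        |deriv (fun r => Dtil s m τ r n k) t| ≤ c₀ * s' τ * s' t) ∧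
      (∀ᵐ t ∂(volume.restrict (Set.Ioo 0 T)), ∀ n k : Fin (m + 1),
        |deriv (fun r => Emat α s m r n k) t| ≤ c₀ * s' t) :=
  stmt_13_general α T b m hb s s' hs'int hsAC hs'pos hs'cont
end

section
/- Let α ∈ (0,1), T > 0, b > 0, m ∈ ℕ, and let s : [0,T] → ℝ be absolutely continuous with s(0) = b, ṡ ≥ 0, and t ↦ t^{1−α} ṡ(t) continuous on [0,T]. Then for every τ > 0, lim_{t → τ⁺} (t−τ)^{−α} B(τ,t) = 0 and lim_{t → τ⁺} (t−τ)^{−α} D̃(τ,t) = 0 (as (m+1)×(m+1) matrices). -/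
/-
Write `φ_k(x, t) = F(x, s t)` with `F(x, y) = √(2/y) cos(π (k + 1/2) x / y)`, which is smooth on
`y > 0`, hence Lipschitz in `y` near `s τ`, uniformly for `x ∈ [0, s τ]` by compactness. So the
second factor of both integrands is `O(s t - s τ)` uniformly in `x`, while the first factors
`φ_n(·, τ)` and `∂_τ φ_n(·, τ) = ∂_y F(·, s τ) ṡ(τ)` are bounded on `[0, s τ]`. Continuity of
`t ^ (1 - α) ṡ` at `τ > 0` makes `ṡ` continuous at `τ`, so `s` is differentiable there and
`s t - s τ = O(t - τ)`. Both entries are thus `O(t - τ)`, and `(t - τ) ^ (-α) O(t - τ) → 0`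
since `α < 1`.
-/

open MeasureTheory Set Filter
open scoped Topology

open scoped NNReal Interval

/-- `phi s k x t` is definitionally `eigenfun (k + 1 / 2) x (s t)`, which the proofs below use. -/
noncomputable def eigenfun (c x y : ℝ) : ℝ :=
  Real.sqrt (2 / y) * Real.cos (Real.pi / y * c * x)

lemma contDiffOn_eigenfun (c : ℝ) {n : WithTop ℕ∞} :
    ContDiffOn ℝ n (fun p : ℝ × ℝ => eigenfun c p.1 p.2) {p | 0 < p.2} := by
  intro p hp
  have hp₀ : p.2 ≠ 0 := ne_of_gt hp
  unfold eigenfun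
  apply ContDiffAt.contDiffWithinAt
  fun_prop (disch := positivity)

lemma differentiableAt_eigenfun (c x : ℝ) {y : ℝ} (hy : 0 < y) :
    DifferentiableAt ℝ (eigenfun c x) y := by
  have hy₀ : y ≠ 0 := ne_of_gt hy
  unfold eigenfun
  fun_prop (disch := positivity)

lemma exists_lipschitzOnWith_eigenfun (c X : ℝ) {y : ℝ} (hy : 0 < y) :
    ∃ L, ∃ V ∈ 𝓝 y, ∀ x ∈ Icc 0 X, LipschitzOnWith L (eigenfun c x) V := by
  have hK : Icc 0 X ×ˢ Icc (y / 2) (2 * y) ⊆ {p : ℝ × ℝ | 0 < p.2} :=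
    fun p hp => (half_pos hy).trans_le hp.2.1
  obtain ⟨L, hL⟩ := ((contDiffOn_eigenfun c).mono hK).exists_lipschitzOnWith one_ne_zero
    ((convex_Icc _ _).prod (convex_Icc _ _)) (isCompact_Icc.prod isCompact_Icc)
  refine ⟨L, Icc (y / 2) (2 * y), Icc_mem_nhds (by linarith) (by linarith),
    fun x hx y₁ hy₁ y₂ hy₂ => ?_⟩
  simpa [Prod.edist_eq] using hL (mk_mem_prod hx hy₁) (mk_mem_prod hx hy₂)

lemma continuousAt_of_continuousAt_rpow_mul {f : ℝ → ℝ} {p τ : ℝ} (hτ : 0 < τ)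
    (h : ContinuousAt (fun t => t ^ p * f t) τ) : ContinuousAt f τ := by
  have hpow : ContinuousAt (fun t : ℝ => t ^ (-p)) τ :=
    Real.continuousAt_rpow_const τ (-p) (Or.inl hτ.ne')
  refine (hpow.mul h).congr ?_
  filter_upwards [Ioi_mem_nhds hτ] with t ht
  rw [Pi.mul_apply, ← mul_assoc, ← Real.rpow_add ht, neg_add_cancel, Real.rpow_zero, one_mul]

lemma hasDerivAt_of_eq_add_integral {s s' : ℝ → ℝ} {a b T τ : ℝ}
    (hint : IntegrableOn s' (Icc a T)) (hs : ∀ t ∈ Icc a T, s t = b + ∫ u in a..t, s' u)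
    (hτ : τ ∈ Ioo a T) (hc : ContinuousAt s' τ) : HasDerivAt s (s' τ) τ := by
  have hII : IntervalIntegrable s' volume a τ := by
    refine (hint.mono_set ?_).intervalIntegrable
    rw [uIcc_of_le hτ.1.le]
    exact Icc_subset_Icc_right hτ.2.le
  have hmeas : StronglyMeasurableAtFilter s' (𝓝 τ) :=
    ⟨Icc a T, Icc_mem_nhds hτ.1 hτ.2, hint.aestronglyMeasurable⟩
  refine ((intervalIntegral.integral_hasDerivAt_right hII hmeas hc).const_add b)
    |>.congr_of_eventuallyEq ?_
  filter_upwards [Icc_mem_nhds hτ.1 hτ.2] with t ht using hs t ht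

lemma le_of_eq_add_integral {s s' : ℝ → ℝ} {a b T τ : ℝ}
    (hs : ∀ t ∈ Icc a T, s t = b + ∫ u in a..t, s' u) (hpos : ∀ t ∈ Icc a T, 0 ≤ s' t)
    (hτ : τ ∈ Icc a T) : b ≤ s τ := by
  rw [hs τ hτ, le_add_iff_nonneg_right]
  exact intervalIntegral.integral_nonneg hτ.1 fun u hu => hpos u ⟨hu.1, hu.2.trans hτ.2⟩

lemma tendsto_rpow_neg_mul_nhdsGT_of_isBigO {g : ℝ → ℝ} {τ α : ℝ} (hα : α < 1)
    (hg : g =O[𝓝 τ] fun t => t - τ) :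
    Tendsto (fun t => (t - τ) ^ (-α) * g t) (𝓝[>] τ) (𝓝 0) := by
  have hO : (fun t => (t - τ) ^ (-α) * g t) =O[𝓝[>] τ] fun t => (t - τ) ^ (1 - α) := by
    refine ((Asymptotics.isBigO_refl _ _).mul (hg.mono nhdsWithin_le_nhds)).congr'
      EventuallyEq.rfl ?_
    filter_upwards [self_mem_nhdsWithin] with t ht
    rw [sub_eq_neg_add 1 α, Real.rpow_add (sub_pos.2 ht), Real.rpow_one]
  refine hO.trans_tendsto ?_
  have h0 : Tendsto (fun t : ℝ => t - τ) (𝓝[>] τ) (𝓝 0) :=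
    tendsto_sub_nhds_zero_iff.2 nhdsWithin_le_nhds
  simpa [Function.comp_def, Real.zero_rpow (sub_ne_zero.2 hα.ne')] using
    ((Real.continuousAt_rpow_const 0 (1 - α) (Or.inr (sub_pos.2 hα).le)).tendsto.comp h0)

lemma isBigO_integral_mul_sub_comp {F : ℝ → ℝ → ℝ} {f u : ℝ → ℝ} {X M τ : ℝ} {L : ℝ≥0}
    {V : Set ℝ} (hf : ∀ x ∈ Ι 0 X, |f x| ≤ M) (hF : ∀ x ∈ Ι 0 X, LipschitzOnWith L (F x) V)
    (hV : V ∈ 𝓝 (u τ)) (hu : ContinuousAt u τ) :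
    (fun t => ∫ x in 0..X, f x * (F x (u t) - F x (u τ))) =O[𝓝 τ] fun t => u t - u τ := by
  refine Asymptotics.IsBigO.of_bound (M * L * |X|) ?_
  filter_upwards [hu hV] with t ht
  have hpt : ∀ x ∈ Ι 0 X, ‖f x * (F x (u t) - F x (u τ))‖ ≤ M * L * ‖u t - u τ‖ := by
    intro x hx
    rw [norm_mul, mul_assoc]
    exact mul_le_mul (hf x hx) ((hF x hx).dist_le_mul _ ht _ (mem_of_mem_nhds hV))
      (norm_nonneg _) ((abs_nonneg _).trans (hf x hx))
  calc _ ≤ M * L * ‖u t - u τ‖ * |X - 0| := intervalIntegral.norm_integral_le_of_norm_le_const hpt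
    _ = _ := by rw [sub_zero]; ring

lemma abs_phi_le (s : ℝ → ℝ) (n : ℕ) (x t : ℝ) : |phi s n x t| ≤ Real.sqrt (2 / s t) := by
  rw [phi, abs_mul, abs_of_nonneg (Real.sqrt_nonneg _)]
  exact mul_le_of_le_one_right (Real.sqrt_nonneg _) (Real.abs_cos_le_one _)

lemma exists_abs_deriv_phi_le {s : ℝ → ℝ} {τ d : ℝ} (hs : HasDerivAt s d τ) (hsτ : 0 < s τ)
    (n : ℕ) : ∃ M, ∀ x ∈ Icc 0 (s τ), |deriv (fun r => phi s n x r) τ| ≤ M := by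
  obtain ⟨L, V, hV, hL⟩ := exists_lipschitzOnWith_eigenfun (n + 1 / 2) (s τ) hsτ
  refine ⟨L * |d|, fun x hx => ?_⟩
  have hchain : deriv (fun r => phi s n x r) τ = deriv (eigenfun (n + 1 / 2) x) (s τ) * d :=
    ((differentiableAt_eigenfun _ x hsτ).hasDerivAt.comp τ hs).deriv
  rw [hchain, abs_mul]
  exact mul_le_mul_of_nonneg_right (norm_deriv_le_of_lipschitzOn hV (hL x hx)) (abs_nonneg d)

lemma tendsto_rpow_neg_mul_integral_mul_phi_sub {s f : ℝ → ℝ} {τ α d M : ℝ} (hα : α < 1)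
    (hs : HasDerivAt s d τ) (hsτ : 0 < s τ) (hf : ∀ x ∈ Icc 0 (s τ), |f x| ≤ M) (k : ℕ) :
    Tendsto (fun t => (t - τ) ^ (-α) * ∫ x in 0..s τ, f x * (phi s k x t - phi s k x τ))
      (𝓝[>] τ) (𝓝 0) := by
  obtain ⟨L, V, hV, hL⟩ := exists_lipschitzOnWith_eigenfun (k + 1 / 2) (s τ) hsτ
  have hI : Ι 0 (s τ) ⊆ Icc 0 (s τ) := by
    rw [uIoc_of_le hsτ.le]; exact Ioc_subset_Icc_self
  refine tendsto_rpow_neg_mul_nhdsGT_of_isBigO hα ?_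
  exact (isBigO_integral_mul_sub_comp (F := eigenfun (k + 1 / 2)) (fun x hx => hf x (hI hx))
    (fun x hx => hL x (hI hx)) hV hs.continuousAt).trans hs.isBigO_sub

theorem stmt_15_general (α T b : ℝ) (m : ℕ) (hα : α ∈ Set.Ioo (0:ℝ) 1) (hb : 0 < b)
    (s s' : ℝ → ℝ)
    (hs'int : IntegrableOn s' (Set.Icc 0 T))
    (hsAC : ∀ t ∈ Set.Icc (0:ℝ) T, s t = b + ∫ τ in (0:ℝ)..t, s' τ)
    (hs'pos : ∀ t ∈ Set.Icc (0:ℝ) T, 0 ≤ s' t)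
    (hs'cont : ContinuousOn (fun t : ℝ => t ^ (1 - α) * s' t) (Set.Icc 0 T)) :
    ∀ τ ∈ Set.Ioo (0:ℝ) T, ∀ n k : Fin (m + 1),
      Filter.Tendsto (fun t => (t - τ) ^ (-α) * Bmat s m τ t n k)
        (nhdsWithin τ (Set.Ioc τ T)) (nhds 0) ∧
      Filter.Tendsto (fun t => (t - τ) ^ (-α) * Dtil s m τ t n k)
        (nhdsWithin τ (Set.Ioc τ T)) (nhds 0) := by
  intro τ hτ n k
  have hs'τ : ContinuousAt s' τ := continuousAt_of_continuousAt_rpow_mul hτ.1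
    (hs'cont.continuousAt (Icc_mem_nhds hτ.1 hτ.2))
  have hs : HasDerivAt s (s' τ) τ := hasDerivAt_of_eq_add_integral hs'int hsAC hτ hs'τ
  have hsτ : 0 < s τ := hb.trans_le (le_of_eq_add_integral hsAC hs'pos (Ioo_subset_Icc_self hτ))
  have hle : 𝓝[Ioc τ T] τ ≤ 𝓝[>] τ := nhdsWithin_mono τ Ioc_subset_Ioi_self
  obtain ⟨M, hM⟩ := exists_abs_deriv_phi_le hs hsτ n
  exact ⟨(tendsto_rpow_neg_mul_integral_mul_phi_sub hα.2 hs hsτ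
      (fun x _ => abs_phi_le s n x τ) k).mono_left hle,
    (tendsto_rpow_neg_mul_integral_mul_phi_sub hα.2 hs hsτ hM k).mono_left hle⟩

/-- For every `τ > 0`, `(t−τ)^{−α} B(τ,t) → 0` and
`(t−τ)^{−α} D̃(τ,t) → 0` (entrywise) as `t → τ⁺`. -/
theorem stmt_15 (α T b : ℝ) (m : ℕ) (hα : α ∈ Set.Ioo (0:ℝ) 1) (hT : 0 < T) (hb : 0 < b)
    (s s' : ℝ → ℝ)
    (hs'int : IntegrableOn s' (Set.Icc 0 T))
    (hsAC : ∀ t ∈ Set.Icc (0:ℝ) T, s t = b + ∫ τ in (0:ℝ)..t, s' τ)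
    (hs'pos : ∀ t ∈ Set.Icc (0:ℝ) T, 0 ≤ s' t)
    (hs'cont : ContinuousOn (fun t : ℝ => t ^ (1 - α) * s' t) (Set.Icc 0 T)) :
    ∀ τ ∈ Set.Ioo (0:ℝ) T, ∀ n k : Fin (m + 1),
      Filter.Tendsto (fun t => (t - τ) ^ (-α) * Bmat s m τ t n k)
        (nhdsWithin τ (Set.Ioc τ T)) (nhds 0) ∧
      Filter.Tendsto (fun t => (t - τ) ^ (-α) * Dtil s m τ t n k)
        (nhdsWithin τ (Set.Ioc τ T)) (nhds 0) :=
  stmt_15_general α T b m hα hb s s' hs'int hsAC hs'pos hs'cont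
end

section
/- Let α ∈ (0,1). For every x ∈ (0,1), x^α ∫_x^1 (1−a)^{α−1} a^{−1} (a−x)^{−α} da = ∫₀^∞ a^{α−1}/(1+a) da = π/sin(πα). In particular the function G₁(x) = x^α ∫_x^1 (1−a)^{α−1} a^{−1} (a−x)^{−α} da is constant on (0,1). -/
/-!
Both integrals are Beta integrals `B(α, 1 - α) = Γ(α) Γ(1 - α) = π / sin (π α)` in disguise:
the Möbius substitutions `a = u / (1 - u)` on `(0, ∞)` and `a = x / (x + (1 - x) w)` on `(x, 1)`
turn them into `∫₀¹ u^(α-1) (1-u)^(-α) du`, the second one up to the factor `x^(-α)`.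
-/

open MeasureTheory Set Filter
open scoped Topology

theorem integral_Ioo_rpow_mul_one_sub_rpow {s t : ℝ} (hs : 0 < s) (ht : 0 < t) :
    ∫ u in Ioo (0:ℝ) 1, u ^ (s - 1) * (1 - u) ^ (t - 1)
      = Real.Gamma s * Real.Gamma t / Real.Gamma (s + t) := by
  have hβ := Complex.betaIntegral_convergent (u := s) (v := t) (by simpa) (by simpa)
  rw [intervalIntegrable_iff_integrableOn_Ioo_of_le zero_le_one] at hβ
  rw [← ProbabilityTheory.beta, ProbabilityTheory.beta_eq_betaIntegralReal s t hs ht,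
    Complex.betaIntegral, intervalIntegral.integral_of_le zero_le_one,
    integral_Ioc_eq_integral_Ioo, ← RCLike.re_to_complex, ← integral_re hβ]
  refine setIntegral_congr_fun measurableSet_Ioo fun u ⟨hu0, hu1⟩ ↦ ?_
  norm_cast
  rw [← Complex.ofReal_cpow hu0.le, ← Complex.ofReal_cpow (sub_nonneg.2 hu1.le)]
  norm_cast

theorem integral_Ioo_rpow_mul_one_sub_rpow_neg {α : ℝ} (hα : α ∈ Ioo (0:ℝ) 1) :
    ∫ u in Ioo (0:ℝ) 1, u ^ (α - 1) * (1 - u) ^ (-α) = Real.pi / Real.sin (Real.pi * α) := by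
  have h := integral_Ioo_rpow_mul_one_sub_rpow hα.1 (sub_pos.2 hα.2)
  rwa [sub_sub_cancel_left, add_sub_cancel, Real.Gamma_one, div_one,
    Real.Gamma_mul_Gamma_one_sub] at h

theorem integral_Ioi_eq_integral_Ioo_div_one_sub {E : Type*} [NormedAddCommGroup E]
    [NormedSpace ℝ E] (f : ℝ → E) :
    ∫ a in Ioi (0:ℝ), f a = ∫ u in Ioo (0:ℝ) 1, ((1 - u) ^ 2)⁻¹ • f (u / (1 - u)) := by
  have himage : (fun u : ℝ ↦ u / (1 - u)) '' Ioo 0 1 = Ioi 0 := by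
    refine Subset.antisymm (image_subset_iff.2 fun u ⟨hu0, hu1⟩ ↦ div_pos hu0 (sub_pos.2 hu1))
      fun a (ha : 0 < a) ↦ ⟨a / (1 + a), ⟨by positivity, ?_⟩, ?_⟩
    · rw [div_lt_one (by positivity)]; linarith
    · field_simp; ring
  have hderiv : ∀ u ∈ Ioo (0:ℝ) 1,
      HasDerivWithinAt (fun u ↦ u / (1 - u)) ((1 - u) ^ 2)⁻¹ (Ioo 0 1) u := by
    intro u ⟨_, hu1⟩
    exact (((hasDerivAt_id' u).div ((hasDerivAt_id' u).const_sub 1)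
      (sub_pos.2 hu1).ne').congr_deriv (by ring)).hasDerivWithinAt
  have hmono : MonotoneOn (fun u : ℝ ↦ u / (1 - u)) (Ioo 0 1) :=
    fun u ⟨hu0, _⟩ v ⟨_, hv1⟩ huv ↦
      div_le_div₀ (by linarith) huv (sub_pos.2 hv1) (by linarith)
  rw [← himage, integral_image_eq_integral_deriv_smul_of_monotoneOn measurableSet_Ioo hderiv hmono]

theorem integral_Ioo_eq_integral_Ioo_zero_one_div_add_mul {E : Type*} [NormedAddCommGroup E]
    [NormedSpace ℝ E] {x : ℝ} (hx : x ∈ Ioo (0:ℝ) 1) (f : ℝ → E) :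
    ∫ a in Ioo x 1, f a
      = ∫ w in Ioo (0:ℝ) 1, (x * (1 - x) / (x + (1 - x) * w) ^ 2) • f (x / (x + (1 - x) * w)) := by
  obtain ⟨hx0, hx1⟩ := hx
  have hD : ∀ w ∈ Ioo (0:ℝ) 1, 0 < x + (1 - x) * w := fun w ⟨hw0, _⟩ ↦ by
    have := mul_pos (sub_pos.2 hx1) hw0; linarith
  have himage : (fun w ↦ x / (x + (1 - x) * w)) '' Ioo 0 1 = Ioo x 1 := by
    refine Subset.antisymm (image_subset_iff.2 fun w hw ↦ ?_) fun a ⟨hxa, ha1⟩ ↦ ?_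
    · have : (1 - x) * w < 1 - x := mul_lt_of_lt_one_right (sub_pos.2 hx1) hw.2
      have : 0 < (1 - x) * w := mul_pos (sub_pos.2 hx1) hw.1
      constructor
      · rw [lt_div_iff₀ (hD w hw)]; nlinarith
      · rw [div_lt_one (hD w hw)]; linarith
    · have ha0 : 0 < a := hx0.trans hxa
      have : 0 < 1 - x := sub_pos.2 hx1
      have : 0 < 1 - a := sub_pos.2 ha1
      refine ⟨x * (1 - a) / ((1 - x) * a), ⟨by positivity, ?_⟩, ?_⟩
      · rw [div_lt_one (by positivity)]; nlinarith
      · field_simp; ring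
  have hderiv : ∀ w ∈ Ioo (0:ℝ) 1, HasDerivWithinAt (fun w ↦ x / (x + (1 - x) * w))
      (-(x * (1 - x) / (x + (1 - x) * w) ^ 2)) (Ioo 0 1) w := by
    intro w hw
    exact (((hasDerivAt_const w x).div (((hasDerivAt_id' w).const_mul (1 - x)).const_add x)
      (hD w hw).ne').congr_deriv (by ring)).hasDerivWithinAt
  have hanti : AntitoneOn (fun w ↦ x / (x + (1 - x) * w)) (Ioo 0 1) :=
    fun u hu v hv huv ↦ div_le_div_of_nonneg_left hx0.le (hD u hu)
      (by nlinarith)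
  rw [← himage, integral_image_eq_integral_deriv_smul_of_antitoneOn measurableSet_Ioo hderiv hanti]
  simp_rw [neg_neg]

theorem integral_Ioi_rpow_sub_one_div_one_add {α : ℝ} (hα : α ∈ Ioo (0:ℝ) 1) :
    ∫ a in Ioi (0:ℝ), a ^ (α - 1) / (1 + a) = Real.pi / Real.sin (Real.pi * α) := by
  rw [integral_Ioi_eq_integral_Ioo_div_one_sub, ← integral_Ioo_rpow_mul_one_sub_rpow_neg hα]
  refine setIntegral_congr_fun measurableSet_Ioo fun u ⟨hu0, hu1⟩ ↦ ?_
  have hv : 0 < 1 - u := sub_pos.2 hu1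
  have := Real.rpow_pos_of_pos hv α
  rw [smul_eq_mul, Real.div_rpow hu0.le hv.le, Real.rpow_sub_one hv.ne', Real.rpow_neg hv.le]
  field_simp
  ring

theorem integral_Ioo_one_sub_rpow_mul_inv_mul_sub_rpow {α x : ℝ} (hα : α ∈ Ioo (0:ℝ) 1)
    (hx : x ∈ Ioo (0:ℝ) 1) :
    ∫ a in Ioo x 1, (1 - a) ^ (α - 1) * a⁻¹ * (a - x) ^ (-α)
      = x ^ (-α) * (Real.pi / Real.sin (Real.pi * α)) := by
  rw [integral_Ioo_eq_integral_Ioo_zero_one_div_add_mul hx, ← integral_Ioo_rpow_mul_one_sub_rpow_neg hα,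
    ← integral_const_mul]
  refine setIntegral_congr_fun measurableSet_Ioo fun w ⟨hw0, hw1⟩ ↦ ?_
  obtain ⟨hx0, hx1⟩ := hx
  have hx' : 0 < 1 - x := sub_pos.2 hx1
  have hw' : 0 < 1 - w := sub_pos.2 hw1
  set D := x + (1 - x) * w
  have hD : 0 < D := by positivity
  have h1 : 1 - x / D = (1 - x) * w / D := by field_simp; ring
  have h2 : x / D - x = x * (1 - x) * (1 - w) / D := by field_simp; ring
  rw [smul_eq_mul, h1, h2, Real.div_rpow (by positivity) hD.le,
    Real.div_rpow (by positivity) hD.le, Real.mul_rpow hx'.le hw0.le,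
    Real.mul_rpow (by positivity) hw'.le, Real.mul_rpow hx0.le hx'.le]
  simp only [Real.rpow_sub_one hx'.ne', Real.rpow_sub_one hw0.ne', Real.rpow_sub_one hD.ne',
    Real.rpow_neg hx0.le, Real.rpow_neg hx'.le, Real.rpow_neg hw'.le, Real.rpow_neg hD.le]
  have := Real.rpow_pos_of_pos hx0 α
  have := Real.rpow_pos_of_pos hx' α
  have := Real.rpow_pos_of_pos hw0 α
  have := Real.rpow_pos_of_pos hw' α
  have := Real.rpow_pos_of_pos hD α
  field_simp

/-- For `α ∈ (0,1)` and every `x ∈ (0,1)`,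
`x^α ∫_x^1 (1−a)^{α−1} a^{−1} (a−x)^{−α} da = ∫₀^∞ a^{α−1}/(1+a) da = π/sin(πα)`;
in particular `G₁(x) = x^α ∫_x^1 (1−a)^{α−1} a^{−1} (a−x)^{−α} da` is constant on `(0,1)`. -/
theorem stmt_17 (α : ℝ) (hα : α ∈ Set.Ioo (0:ℝ) 1) :
    (∀ x ∈ Set.Ioo (0:ℝ) 1,
        x ^ α * ∫ a in Set.Ioo x 1, (1 - a) ^ (α - 1) * a⁻¹ * (a - x) ^ (-α)
          = Real.pi / Real.sin (Real.pi * α)) ∧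
      (∫ a in Set.Ioi (0:ℝ), a ^ (α - 1) / (1 + a))
        = Real.pi / Real.sin (Real.pi * α) := by
  refine ⟨fun x hx ↦ ?_, integral_Ioi_rpow_sub_one_div_one_add hα⟩
  rw [integral_Ioo_one_sub_rpow_mul_inv_mul_sub_rpow hα hx, ← mul_assoc,
    ← Real.rpow_add hx.1, add_neg_cancel, Real.rpow_zero, one_mul]
end

section
/- Let α ∈ (0,1). There exists a constant c₀ = c₀(α) < ∞ such that for every a > 0, g(a) := ∫₀^a [t^{α−1} − (1+t)^{α−1}] (1 − t/a)^{α−1} dt ≤ c₀; that is, sup_{a ∈ (0,∞)} g(a) is finite. -/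
/-!
Write `f t = t^(α-1) - (1+t)^(α-1)` and `φ t = (1 - t/a)^(α-1)`. Since
`t f(t) = t^α - (1+t)^α + (1+t)^(α-1) ≤ 1`, on `(a/2, a)` we have `f ≤ 2/a`, while on `(0, a/2]`
we have `φ ≤ 2`. Hence `f φ ≤ 2 f + (2/a) φ` on `(0, a)`, and both majorants integrate explicitly:
`∫₀^a f = (a^α + 1 - (1+a)^α)/α ≤ 1/α` and `∫₀^a φ = a/α`, so `g(a) ≤ 4/α`.
-/

open MeasureTheory Set Filter
open scoped Topology

namespace Real

variable {α : ℝ}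

theorem rpow_sub_one_sub_one_add_rpow_nonneg (hα₁ : α ≤ 1) {t : ℝ} (ht : 0 < t) :
    0 ≤ t ^ (α - 1) - (1 + t) ^ (α - 1) :=
  sub_nonneg.mpr (rpow_le_rpow_of_nonpos ht (by linarith) (by linarith))

theorem mul_rpow_sub_one_sub_one_add_rpow_le_one (hα₀ : 0 ≤ α) (hα₁ : α ≤ 1) {t : ℝ}
    (ht : 0 < t) : t * (t ^ (α - 1) - (1 + t) ^ (α - 1)) ≤ 1 := by
  have ht' : 0 < 1 + t := by linarith
  have hmono : t ^ α ≤ (1 + t) ^ α := rpow_le_rpow ht.le (by linarith) hα₀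
  have hle_one : (1 + t) ^ (α - 1) ≤ 1 :=
    rpow_le_one_of_one_le_of_nonpos (by linarith) (by linarith)
  calc t * (t ^ (α - 1) - (1 + t) ^ (α - 1))
      = t ^ α - (1 + t) ^ α + (1 + t) ^ (α - 1) := by
        rw [rpow_sub_one ht.ne', rpow_sub_one ht'.ne']
        field_simp
        ring
    _ ≤ 1 := by linarith

theorem one_sub_div_rpow_nonneg {a t : ℝ} (ha : 0 < a) (hta : t ≤ a) (p : ℝ) :
    0 ≤ (1 - t / a) ^ p :=
  rpow_nonneg (by rw [sub_nonneg, div_le_one ha]; exact hta) p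

theorem one_sub_div_rpow_le_two (hα₀ : 0 ≤ α) (hα₁ : α ≤ 1) {a t : ℝ} (ha : 0 < a)
    (ht : t ≤ a / 2) : (1 - t / a) ^ (α - 1) ≤ 2 := by
  have hhalf : 1 / 2 ≤ 1 - t / a := by
    rw [le_sub_comm, div_le_iff₀ ha]
    linarith
  calc (1 - t / a) ^ (α - 1) ≤ (1 / 2 : ℝ) ^ (α - 1) :=
        rpow_le_rpow_of_nonpos (by norm_num) hhalf (by linarith)
    _ ≤ (1 / 2 : ℝ) ^ (-1 : ℝ) :=
        rpow_le_rpow_of_exponent_ge (by norm_num) (by norm_num) (by linarith)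
    _ = 2 := by norm_num [rpow_neg_one]

theorem rpow_sub_one_sub_one_add_rpow_mul_le (hα₀ : 0 ≤ α) (hα₁ : α ≤ 1) {a t : ℝ}
    (ht : t ∈ Ioo 0 a) :
    (t ^ (α - 1) - (1 + t) ^ (α - 1)) * (1 - t / a) ^ (α - 1)
      ≤ 2 * (t ^ (α - 1) - (1 + t) ^ (α - 1)) + 2 / a * (1 - t / a) ^ (α - 1) := by
  obtain ⟨ht₀, hta⟩ := ht
  have ha : 0 < a := ht₀.trans hta
  have hf := rpow_sub_one_sub_one_add_rpow_nonneg hα₁ ht₀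
  have hφ := one_sub_div_rpow_nonneg ha hta.le (α - 1)
  rcases le_or_gt t (a / 2) with hleft | hright
  · have hφ_le := mul_le_mul_of_nonneg_left (one_sub_div_rpow_le_two hα₀ hα₁ ha hleft) hf
    have := mul_nonneg (div_nonneg zero_le_two ha.le) hφ
    linarith
  · have hf_le : t ^ (α - 1) - (1 + t) ^ (α - 1) ≤ 2 / a :=
      calc _ ≤ 1 / t := by
            rw [le_div_iff₀ ht₀, mul_comm]
            exact mul_rpow_sub_one_sub_one_add_rpow_le_one hα₀ hα₁ ht₀
        _ ≤ 2 / a := by rw [div_le_div_iff₀ ht₀ ha]; linarith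
    have := mul_le_mul_of_nonneg_right hf_le hφ
    linarith

theorem intervalIntegrable_one_add_rpow (hα : 0 < α) (b : ℝ) :
    IntervalIntegrable (fun t => (1 + t) ^ (α - 1)) volume 0 b := by
  simpa using (intervalIntegral.intervalIntegrable_rpow' (by linarith : -1 < α - 1)
    (a := 1) (b := 1 + b)).comp_add_left 1

theorem intervalIntegrable_rpow_sub_one_sub_one_add_rpow (hα : 0 < α) (b : ℝ) :
    IntervalIntegrable (fun t => t ^ (α - 1) - (1 + t) ^ (α - 1)) volume 0 b :=
  (intervalIntegral.intervalIntegrable_rpow' (by linarith)).sub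
    (intervalIntegrable_one_add_rpow hα b)

theorem integral_rpow_sub_one_sub_one_add_rpow (hα : 0 < α) (b : ℝ) :
    ∫ t in (0)..b, (t ^ (α - 1) - (1 + t) ^ (α - 1)) = (b ^ α + 1 - (1 + b) ^ α) / α := by
  have hr : -1 < α - 1 := by linarith
  rw [intervalIntegral.integral_sub (intervalIntegral.intervalIntegrable_rpow' hr)
      (intervalIntegrable_one_add_rpow hα b),
    intervalIntegral.integral_comp_add_left (fun x : ℝ => x ^ (α - 1)),
    integral_rpow (Or.inl hr), integral_rpow (Or.inl hr)]
  simp [zero_rpow hα.ne']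
  ring

theorem integral_one_sub_div_rpow (hα : 0 < α) {a : ℝ} (ha : a ≠ 0) :
    ∫ t in (0)..a, (1 - t / a) ^ (α - 1) = a / α := by
  rw [intervalIntegral.integral_comp_sub_div (fun x : ℝ => x ^ (α - 1)) ha,
    integral_rpow (Or.inl (by linarith))]
  simp [ha, zero_rpow hα.ne']
  ring

-- Nonzero integral forces integrability.
theorem intervalIntegrable_one_sub_div_rpow (hα : 0 < α) {a : ℝ} (ha : 0 < a) :
    IntervalIntegrable (fun t => (1 - t / a) ^ (α - 1)) volume 0 a :=
  intervalIntegral.intervalIntegrable_of_integral_ne_zero <| by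
    rw [integral_one_sub_div_rpow hα ha.ne']
    positivity

end Real

open Real

/-- For `α ∈ (0,1)` there is a finite constant `c₀ = c₀(α)` with
`g(a) = ∫₀^a [t^{α−1} − (1+t)^{α−1}] (1 − t/a)^{α−1} dt ≤ c₀` for every `a > 0`;
i.e. `sup_{a>0} g(a) < ∞`. -/
theorem stmt_18 (α : ℝ) (hα : α ∈ Set.Ioo (0:ℝ) 1) :
    ∃ c₀ : ℝ, ∀ a > (0:ℝ),
      (∫ t in Set.Ioo (0:ℝ) a,
          (t ^ (α - 1) - (1 + t) ^ (α - 1)) * (1 - t / a) ^ (α - 1)) ≤ c₀ := by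
  obtain ⟨hα₀, hα₁⟩ := hα
  refine ⟨4 / α, fun a ha => ?_⟩
  have hf := intervalIntegrable_rpow_sub_one_sub_one_add_rpow hα₀ a
  have hφ := intervalIntegrable_one_sub_div_rpow hα₀ ha
  have hmajorant : IntegrableOn
      (fun t => 2 * (t ^ (α - 1) - (1 + t) ^ (α - 1)) + 2 / a * (1 - t / a) ^ (α - 1))
      (Ioo 0 a) :=
    (intervalIntegrable_iff_integrableOn_Ioo_of_le ha.le).mp
      ((hf.const_mul 2).add (hφ.const_mul _))
  calc _ ≤ ∫ t in Ioo 0 a,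
        2 * (t ^ (α - 1) - (1 + t) ^ (α - 1)) + 2 / a * (1 - t / a) ^ (α - 1) :=
        integral_mono_of_nonneg
          (ae_restrict_of_forall_mem measurableSet_Ioo fun t ht =>
            mul_nonneg (rpow_sub_one_sub_one_add_rpow_nonneg hα₁.le ht.1)
              (one_sub_div_rpow_nonneg ha ht.2.le _))
          hmajorant
          (ae_restrict_of_forall_mem measurableSet_Ioo fun t ht =>
            rpow_sub_one_sub_one_add_rpow_mul_le hα₀.le hα₁.le ht)
    _ = 2 * ((a ^ α + 1 - (1 + a) ^ α) / α) + 2 / a * (a / α) := by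
        rw [← integral_Ioc_eq_integral_Ioo, ← intervalIntegral.integral_of_le ha.le,
          intervalIntegral.integral_add (hf.const_mul 2) (hφ.const_mul _),
          intervalIntegral.integral_const_mul, intervalIntegral.integral_const_mul,
          integral_rpow_sub_one_sub_one_add_rpow hα₀ a, integral_one_sub_div_rpow hα₀ ha.ne']
    _ ≤ 4 / α := by
        have hmono : a ^ α ≤ (1 + a) ^ α := rpow_le_rpow ha.le (by linarith) hα₀.le
        have hfirst : (a ^ α + 1 - (1 + a) ^ α) / α ≤ 1 / α := by gcongr; linarith
        have hsecond : 2 / a * (a / α) = 2 / α := by field_simp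
        have hsum : 4 / α = 2 * (1 / α) + 2 / α := by ring
        linarith
end
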